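/- arXiv:1806.01208 — 11 statements merged into one kernel-verified Lean document; each statement's English description precedes it below -/
import Mathlib

section
/- If {a_i} is a rigid divisibility sequence in the ring of integers O_K of a number field K, then for all i, j ≥ 1 the ideal generated by a_i and a_j equals the ideal generated by a_{gcd(i,j)}. -/
open NumberField

/-- A sequence in the ring of integers of a number field `K` is a rigid divisibility
sequence if for every non-archimedean absolute value `|·|` on `K`:
(1) `|a n| < 1` implies `|a (k*n)| = |a n|` for all `k ≥ 1`;
(2) `|a n| < 1` and `|a j| < 1` imply `|a (gcd n j)| < 1`. -/
def IsRigidDivisibilitySequence {K : Type*} [Field K] [NumberField K]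
    (a : ℕ → 𝓞 K) : Prop :=
  ∀ v : AbsoluteValue K ℝ, (∀ x y : K, v (x + y) ≤ max (v x) (v y)) →
    (∀ n k : ℕ, 1 ≤ n → 1 ≤ k → v (algebraMap (𝓞 K) K (a n)) < 1 →
      v (algebraMap (𝓞 K) K (a (k * n))) = v (algebraMap (𝓞 K) K (a n))) ∧
    (∀ n j : ℕ, 1 ≤ n → 1 ≤ j → v (algebraMap (𝓞 K) K (a n)) < 1 →
      v (algebraMap (𝓞 K) K (a j)) < 1 →
      v (algebraMap (𝓞 K) K (a (Nat.gcd n j))) < 1)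
/-! Every height-one prime `v` of `𝓞 K` yields a non-archimedean absolute value on `K`, for which
`|x| < 1` means `x ∈ v` and equal absolute values mean equal `v`-adic valuations. With
`d = gcd i j`, rigidity gives `v (a n) = v (a d)` whenever `d ∣ n` and `a d ∈ v`, hence `a d ∣ a n`.
Write `a i = a d * b` and `a j = a d * c`. No prime contains both `b` and `c`: if it contained
`a d` then `v (a i) < v (a d)`, and otherwise it would contain `a i` and `a j`, hence `a d`.
So `(a i, a j) = (a d) (b, c) = (a d)`. -/

open IsDedekindDomain

namespace IsDedekindDomain.HeightOneSpectrum

variable {R : Type*} [CommRing R] [IsDedekindDomain R]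

theorem exists_le_asIdeal (hR : ¬IsField R) {I : Ideal R} (hI : I ≠ ⊤) :
    ∃ v : HeightOneSpectrum R, I ≤ v.asIdeal := by
  obtain ⟨M, hM, hIM⟩ := Ideal.exists_le_maximal I hI
  exact ⟨⟨M, hM.isPrime, Ring.ne_bot_of_isMaximal_of_not_isField hM hR⟩, hIM⟩

theorem isCoprime_of_forall_mem_notMem (hR : ¬IsField R) {b c : R}
    (h : ∀ v : HeightOneSpectrum R, b ∈ v.asIdeal → c ∉ v.asIdeal) : IsCoprime b c := by
  rw [← Ideal.isCoprime_span_singleton_iff, Ideal.isCoprime_iff_sup_eq]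
  by_contra hne
  obtain ⟨v, hv⟩ := exists_le_asIdeal hR hne
  exact h v (hv (Ideal.mem_sup_left (Ideal.mem_span_singleton_self b)))
    (hv (Ideal.mem_sup_right (Ideal.mem_span_singleton_self c)))

theorem dvd_of_forall_intValuation_le {x y : R} (hy : y ≠ 0)
    (h : ∀ v : HeightOneSpectrum R, v.intValuation x ≤ v.intValuation y) : y ∣ x := by
  have hspan : Ideal.span {y} ≠ 0 := by simpa using hy
  rw [← Ideal.span_singleton_le_span_singleton, ← Ideal.dvd_iff_le,
    UniqueFactorizationMonoid.dvd_iff_emultiplicity_le hspan]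
  intro P hP
  let v : HeightOneSpectrum R := ⟨P, Ideal.isPrime_of_prime hP, hP.ne_zero⟩
  have hfin : FiniteMultiplicity v.asIdeal (Ideal.span {y}) :=
    FiniteMultiplicity.of_prime_left v.prime hspan
  rw [hfin.emultiplicity_eq_multiplicity]
  exact v.intValuation_le_exp_iff_le_emultiplicity.mp
    ((h v).trans_eq (v.intValuation_eq_exp_neg_multiplicity hy))

variable {K : Type*} [Field K] [Algebra R K] [IsFractionRing R K]

theorem adicAbv_algebraMap_eq_iff (v : HeightOneSpectrum R) {b : NNReal} (hb : 1 < b) (r s : R) :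
    v.adicAbv hb (algebraMap R K r) = v.adicAbv hb (algebraMap R K s) ↔
      v.intValuation r = v.intValuation s := by
  rw [adicAbv_of_algebraMap, adicAbv_of_algebraMap]
  exact NNReal.coe_inj.trans (WithZeroMulInt.toNNReal_strictMono hb).injective.eq_iff

end IsDedekindDomain.HeightOneSpectrum

theorem Ideal.span_pair_mul_eq_of_isCoprime {R : Type*} [CommRing R] {x b c : R}
    (h : IsCoprime b c) : Ideal.span {x * b, x * c} = Ideal.span {x} := by
  obtain ⟨u, w, huw⟩ := h
  refine le_antisymm ?_ ?_
  · rw [Ideal.span_le, Set.insert_subset_iff, Set.singleton_subset_iff]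
    exact ⟨Ideal.mul_mem_right _ _ (Ideal.mem_span_singleton_self x),
      Ideal.mul_mem_right _ _ (Ideal.mem_span_singleton_self x)⟩
  · rw [Ideal.span_singleton_le_iff_mem, Ideal.mem_span_pair]
    exact ⟨u, w, by linear_combination x * huw⟩

namespace IsRigidDivisibilitySequence

open IsDedekindDomain.HeightOneSpectrum

variable {K : Type*} [Field K] [NumberField K] {a : ℕ → 𝓞 K}

theorem intValuation_eq_of_dvd (hrds : IsRigidDivisibilitySequence a)
    (v : HeightOneSpectrum (𝓞 K)) {d n : ℕ} (hn : 0 < n) (hdn : d ∣ n) (hd : a d ∈ v.asIdeal) :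
    v.intValuation (a n) = v.intValuation (a d) := by
  obtain ⟨k, rfl⟩ := hdn
  rw [← adicAbv_algebraMap_eq_iff (K := K) v one_lt_two, mul_comm]
  exact (hrds _ (v.isNonarchimedean_adicAbv one_lt_two)).1 d k (Nat.pos_of_mul_pos_right hn)
    (Nat.pos_of_mul_pos_left hn) ((v.adicAbv_coe_lt_one_iff one_lt_two _).mpr hd)

theorem gcd_mem (hrds : IsRigidDivisibilitySequence a) (v : HeightOneSpectrum (𝓞 K))
    {i j : ℕ} (hi : 0 < i) (hj : 0 < j) (hai : a i ∈ v.asIdeal) (haj : a j ∈ v.asIdeal) :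
    a (i.gcd j) ∈ v.asIdeal := by
  simp only [← v.adicAbv_coe_lt_one_iff (K := K) one_lt_two] at hai haj ⊢
  exact (hrds _ (v.isNonarchimedean_adicAbv one_lt_two)).2 i j hi hj hai haj

theorem dvd_of_dvd (hrds : IsRigidDivisibilitySequence a) {d n : ℕ} (hn : 0 < n) (hdn : d ∣ n) :
    a d ∣ a n := by
  by_cases h0 : a d = 0
  · obtain ⟨v, -⟩ := exists_le_asIdeal (RingOfIntegers.not_isField K) bot_ne_top
    have hval := hrds.intValuation_eq_of_dvd v hn hdn (h0 ▸ v.asIdeal.zero_mem)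
    rw [h0, map_zero] at hval
    have han : a n = 0 := by
      by_contra han
      exact v.intValuation_ne_zero _ han hval
    rw [h0, han]
  refine dvd_of_forall_intValuation_le h0 fun v ↦ ?_
  by_cases hd : a d ∈ v.asIdeal
  · exact (hrds.intValuation_eq_of_dvd v hn hdn hd).le
  · rw [(v.intValuation_eq_one_iff_mem_primeCompl _).mpr hd]
    exact v.intValuation_le_one _

theorem isCoprime_of_eq_mul (hrds : IsRigidDivisibilitySequence a) {i j : ℕ} (hi : 0 < i)
    (hj : 0 < j) (h0 : a (i.gcd j) ≠ 0) {b c : 𝓞 K} (hb : a i = a (i.gcd j) * b)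
    (hc : a j = a (i.gcd j) * c) : IsCoprime b c := by
  refine isCoprime_of_forall_mem_notMem (RingOfIntegers.not_isField K) fun v hbv hcv ↦ ?_
  by_cases hd : a (i.gcd j) ∈ v.asIdeal
  · have hval := hrds.intValuation_eq_of_dvd v hi (i.gcd_dvd_left j) hd
    rw [hb, map_mul, mul_eq_left₀ (v.intValuation_ne_zero _ h0),
      v.intValuation_eq_one_iff_mem_primeCompl] at hval
    exact hval hbv
  · exact hd (hrds.gcd_mem v hi hj (hb ▸ v.asIdeal.mul_mem_left _ hbv)
      (hc ▸ v.asIdeal.mul_mem_left _ hcv))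

end IsRigidDivisibilitySequence

/-- If `{a_i}` is a rigid divisibility sequence in the ring of integers
`𝓞 K` of a number field `K`, then for all `i, j ≥ 1` the ideal generated by
`a_i` and `a_j` equals the ideal generated by `a_{gcd(i,j)}`. -/
theorem rigid_divisibility_span_pair {K : Type*} [Field K] [NumberField K]
    (a : ℕ → 𝓞 K) (hrds : IsRigidDivisibilitySequence a)
    (i j : ℕ) (hi : 1 ≤ i) (hj : 1 ≤ j) :
    Ideal.span {a i, a j} = Ideal.span {a (Nat.gcd i j)} := by
  obtain ⟨b, hb⟩ := hrds.dvd_of_dvd hi (Nat.gcd_dvd_left i j)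
  obtain ⟨c, hc⟩ := hrds.dvd_of_dvd hj (Nat.gcd_dvd_right i j)
  rcases eq_or_ne (a (Nat.gcd i j)) 0 with h0 | h0
  · simp [hb, hc, h0]
  rw [hb, hc]
  exact Ideal.span_pair_mul_eq_of_isCoprime (hrds.isCoprime_of_eq_mul hi hj h0 hb hc)
end

section
/- Let f(x) = x^d + c be post-critically finite with exact type (m,n), K = ℚ(c), and a_i = f^i(0) ∈ O_K. Then for all i, j ≥ 1 with gcd(i,n) = gcd(j,n), the ideals (a_i) and (a_j) of O_K are equal. In particular (a_i) = (a_{gcd(i,n)}) for all i. -/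
/-!
Because `x - y ∣ f x - f y`, the orbit `aᵢ = fⁱ(0)` is a strong divisibility sequence at the
level of ideals: `(a_u, a_v) = (a_{gcd(u,v)})`, by the Euclidean algorithm on the indices.
The index `x = i (m n + 1)` is a multiple of `i`, lies in the periodic part of the orbit, and
satisfies `gcd(x, n) = gcd(i, n)` as `m n + 1` is coprime to `n`. Hence `a_{x+n} = a_x` and
`(a_{gcd(i,n)}) = (a_x, a_{x+n}) = (a_x) ⊆ (a_i) ⊆ (a_{gcd(i,n)})`.
-/

namespace Function

variable {R : Type*} [CommRing R] {f : R → R}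

lemma sub_dvd_iterate_sub (hf : ∀ x y, x - y ∣ f x - f y) (k : ℕ) (x y : R) :
    x - y ∣ f^[k] x - f^[k] y := by
  induction k with
  | zero => simp
  | succ k ih =>
    simp only [iterate_succ_apply']
    exact ih.trans (hf _ _)

lemma iterate_zero_dvd_iterate_add_sub (hf : ∀ x y, x - y ∣ f x - f y) (u v : ℕ) :
    f^[u] 0 ∣ f^[u + v] 0 - f^[v] 0 := by
  simpa [add_comm u v, iterate_add_apply] using sub_dvd_iterate_sub hf v (f^[u] 0) 0

lemma iterate_zero_dvd_iterate_mul (hf : ∀ x y, x - y ∣ f x - f y) (u k : ℕ) :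
    f^[u] 0 ∣ f^[k * u] 0 := by
  induction k with
  | zero => exact ⟨0, by simp⟩
  | succ k ih =>
    rw [add_one_mul, add_comm]
    simpa using dvd_add (iterate_zero_dvd_iterate_add_sub hf u (k * u)) ih

lemma iterate_zero_dvd_of_dvd (hf : ∀ x y, x - y ∣ f x - f y) {u v : ℕ} (h : u ∣ v) :
    f^[u] 0 ∣ f^[v] 0 := by
  obtain ⟨k, rfl⟩ := h
  simpa [mul_comm] using iterate_zero_dvd_iterate_mul hf u k

lemma span_pair_iterate_zero (hf : ∀ x y, x - y ∣ f x - f y) (u v : ℕ) :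
    Ideal.span {f^[u] 0, f^[v] 0} = Ideal.span {f^[Nat.gcd u v] 0} := by
  induction u, v using Nat.gcd.induction with
  | H0 v => simp
  | H1 u v _ ih =>
    obtain ⟨w, hw⟩ : f^[u] 0 ∣ f^[v] 0 - f^[v % u] 0 := by
      have h := (iterate_zero_dvd_of_dvd hf (dvd_mul_right u (v / u))).trans
        (iterate_zero_dvd_iterate_add_sub hf (u * (v / u)) (v % u))
      rwa [add_comm, Nat.mod_add_div] at h
    have hv : f^[v] 0 = f^[v % u] 0 + w * f^[u] 0 := by linear_combination hw
    rw [Set.pair_comm, hv, Ideal.span_pair_add_mul_right, ih, ← Nat.gcd_rec]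

lemma iterate_add_period_of_le {m n x : ℕ} (hper : f^[m + n] 0 = f^[m] 0) (hx : m ≤ x) :
    f^[x + n] 0 = f^[x] 0 := by
  obtain ⟨k, rfl⟩ := Nat.exists_eq_add_of_le' hx
  rw [add_assoc, iterate_add_apply, hper, ← iterate_add_apply]

theorem span_iterate_zero_eq_span_iterate_gcd (hf : ∀ x y, x - y ∣ f x - f y) {m n i : ℕ}
    (hn : 0 < n) (hper : f^[m + n] 0 = f^[m] 0) (hi : 0 < i) :
    Ideal.span {f^[i] 0} = Ideal.span {f^[Nat.gcd i n] 0} := by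
  set x := i * (m * n + 1)
  have hmx : m ≤ x :=
    (Nat.le_succ_of_le (Nat.le_mul_of_pos_right m hn)).trans (Nat.le_mul_of_pos_left _ hi)
  have hgcd : Nat.gcd x (x + n) = Nat.gcd i n := by
    rw [Nat.gcd_self_add_right, Nat.Coprime.gcd_mul_right_cancel]
    simp
  have hspan : Ideal.span {f^[Nat.gcd i n] 0} = Ideal.span {f^[x] 0} := by
    rw [← hgcd, ← span_pair_iterate_zero hf, iterate_add_period_of_le hper hmx,
      Set.pair_eq_singleton]
  refine le_antisymm ?_ ?_
  · exact Ideal.span_singleton_le_span_singleton.mpr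
      (iterate_zero_dvd_of_dvd hf (Nat.gcd_dvd_left i n))
  · exact hspan.le.trans (Ideal.span_singleton_le_span_singleton.mpr
      (iterate_zero_dvd_of_dvd hf (dvd_mul_right i _)))

end Function

open NumberField

theorem span_orbit_eq_of_gcd_eq_general {K : Type*} [Field K]
    (d m n : ℕ) (hn : 1 ≤ n)
    (c : 𝓞 K)
    (f : 𝓞 K → 𝓞 K) (hf : f = fun x => x ^ d + c)
    (a : ℕ → 𝓞 K) (ha : ∀ i, a i = f^[i] 0)
    (hper : f^[m + n] 0 = f^[m] 0) :
    (∀ i j : ℕ, 1 ≤ i → 1 ≤ j → Nat.gcd i n = Nat.gcd j n →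
      Ideal.span {a i} = Ideal.span {a j}) ∧
    (∀ i : ℕ, 1 ≤ i → Ideal.span {a i} = Ideal.span {a (Nat.gcd i n)}) := by
  have hsub : ∀ x y, x - y ∣ f x - f y := fun x y => by
    simpa [hf] using sub_dvd_pow_sub_pow x y d
  have key : ∀ i, 1 ≤ i → Ideal.span {a i} = Ideal.span {a (Nat.gcd i n)} := fun i hi => by
    simpa only [ha] using Function.span_iterate_zero_eq_span_iterate_gcd hsub hn hper hi
  exact ⟨fun i j hi hj hij => by rw [key i hi, key j hj, hij], key⟩

/-- Let `f(x) = x^d + c` be post-critically finite with exact type `(m,n)`,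
`K = ℚ(c)`, `a_i = f^i(0) ∈ 𝓞 K`. Then for all `i, j ≥ 1` with `gcd(i,n) = gcd(j,n)`,
the ideals `(a_i)` and `(a_j)` of `𝓞 K` are equal; in particular
`(a_i) = (a_{gcd(i,n)})` for all `i ≥ 1`. -/
theorem span_orbit_eq_of_gcd_eq {K : Type*} [Field K] [NumberField K]
    (d m n : ℕ) (hd : 2 ≤ d) (hm : 0 ≤ m) (hn : 1 ≤ n)
    (c : 𝓞 K)
    (hK : IntermediateField.adjoin ℚ {algebraMap (𝓞 K) K c} = ⊤)
    (f : 𝓞 K → 𝓞 K) (hf : f = fun x => x ^ d + c)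
    (a : ℕ → 𝓞 K) (ha : ∀ i, a i = f^[i] 0)
    (hper : f^[m + n] 0 = f^[m] 0)
    (hmin : ∀ n', 0 < n' → n' < n → f^[m + n'] 0 ≠ f^[m] 0)
    (htail : ∀ k, k < m → f^[k + n] 0 ≠ f^[k] 0) :
    (∀ i j : ℕ, 1 ≤ i → 1 ≤ j → Nat.gcd i n = Nat.gcd j n →
      Ideal.span {a i} = Ideal.span {a j}) ∧
    (∀ i : ℕ, 1 ≤ i → Ideal.span {a i} = Ideal.span {a (Nat.gcd i n)}) :=
  span_orbit_eq_of_gcd_eq_general d m n hn c f hf a ha hper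
end

section
/- Let f(x) = x^d + c be post-critically finite with exact type (m,n), m ≥ 1, K = ℚ(c), a_i = f^i(0) ∈ O_K. If n does not divide i, then a_i is a unit in O_K. -/
/-!
Suppose `a_i` is not a unit and let `M = (a_i)`. Modulo `M` the critical point `0` is periodic with
period `i`, and also with period `n` because its orbit eventually lands on the `n`-cycle; hence it
has period `g = gcd(i, n) < n`. So the cycle contains two distinct points `x` and `y = f^g(x)`,
both in `M`. Since `f(u) - f(v) = (u - v) · ∑ u^j v^(d-1-j)` and this sum lies in `M` when
`u, v ∈ M`, going once around the cycle gives `x - y ∈ (x - y) M`, forcing `1 ∈ M`.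
-/

open NumberField Function

theorem Function.minimalPeriod_eq_of_isPeriodicPt {α : Type*} {f : α → α} {x : α} {n : ℕ}
    (hn : 0 < n) (hx : IsPeriodicPt f n x) (hmin : ∀ k, 0 < k → k < n → ¬ IsPeriodicPt f k x) :
    minimalPeriod f x = n :=
  (hx.minimalPeriod_le hn).antisymm <| not_lt.1 fun h ↦
    hmin _ (hx.minimalPeriod_pos hn) h (isPeriodicPt_minimalPeriod f x)

section

variable {R S : Type*} [CommRing R] [CommRing S] {d : ℕ} {c : R}

theorem RingHom.semiconj_pow_add (φ : R →+* S) :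
    Semiconj φ (· ^ d + c) (· ^ d + φ c) :=
  fun x ↦ by simp only [map_add, map_pow]

theorem pow_sub_pow_mem_span_sub_mul {M : Ideal R} {x y : R} (hd : 2 ≤ d) (hx : x ∈ M)
    (hy : y ∈ M) : x ^ d - y ^ d ∈ Ideal.span {x - y} * M := by
  rw [← geom_sum₂_mul, mul_comm _ (x - y)]
  refine Ideal.mul_mem_mul (Ideal.mem_span_singleton_self _) (Ideal.sum_mem _ fun j _ ↦ ?_)
  rcases Nat.eq_zero_or_pos j with rfl | hj
  · simpa using Ideal.pow_mem_of_mem M hy (d - 1) (by omega)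
  · exact Ideal.mul_mem_right _ M (Ideal.pow_mem_of_mem M hx j hj)

theorem eq_of_isPeriodicPt_of_mem [IsDomain R] {M : Ideal R} (hM : M ≠ ⊤) (hd : 2 ≤ d)
    {n : ℕ} (hn : 0 < n) {x y : R} (hx : IsPeriodicPt (· ^ d + c) n x)
    (hy : IsPeriodicPt (· ^ d + c) n y) (hxM : x ∈ M) (hyM : y ∈ M) : x = y := by
  set J := Ideal.span {x - y} * M
  have hπ := (Ideal.Quotient.mk J).semiconj_pow_add (d := d) (c := c)
  have hxy : Ideal.Quotient.mk J x = Ideal.Quotient.mk J y := by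
    refine (hx.map hπ).eq_of_apply_eq_same (hy.map hπ) hn <|
      (hπ x).symm.trans <| (Ideal.Quotient.eq.2 ?_).trans (hπ y)
    simpa only [add_sub_add_right_eq_sub] using pow_sub_pow_mem_span_sub_mul hd hxM hyM
  obtain ⟨t, htM, ht⟩ := Ideal.mem_span_singleton_mul.1 (Ideal.Quotient.eq.1 hxy)
  by_contra hne
  have ht1 : t = 1 := mul_left_cancel₀ (sub_ne_zero.2 hne) (ht.trans (mul_one _).symm)
  exact hM ((Ideal.eq_top_iff_one M).2 (ht1 ▸ htM))

theorem isUnit_iterate_zero_of_not_dvd [IsDomain R] (hd : 2 ≤ d) {m i : ℕ}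
    (hp : (· ^ d + c)^[m] 0 ∈ periodicPts (· ^ d + c))
    (hi : ¬ minimalPeriod (· ^ d + c) ((· ^ d + c)^[m] 0) ∣ i) :
    IsUnit ((· ^ d + c)^[i] (0 : R)) := by
  set f : R → R := (· ^ d + c)
  set n := minimalPeriod f (f^[m] 0)
  have hn : 0 < n := minimalPeriod_pos_of_mem_periodicPts hp
  have hi0 : 0 < i := Nat.pos_of_ne_zero (by rintro rfl; exact hi (dvd_zero n))
  by_contra hu
  set M := Ideal.span {f^[i] 0}
  have hM : M ≠ ⊤ := mt Ideal.span_singleton_eq_top.1 hu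
  set π := Ideal.Quotient.mk M
  set fbar : R ⧸ M → R ⧸ M := (· ^ d + π c)
  have hπ : Semiconj π f fbar := π.semiconj_pow_add
  have hπ_iter (k : ℕ) : π (f^[k] 0) = fbar^[k] 0 := by
    rw [(hπ.iterate_right k).eq, map_zero]
  have h0i : IsPeriodicPt fbar i 0 := by
    rw [IsPeriodicPt, IsFixedPt, ← hπ_iter, Ideal.Quotient.eq_zero_iff_mem]
    exact Ideal.mem_span_singleton_self _
  have h0n : IsPeriodicPt fbar n 0 :=
    isPeriodicPt_of_mem_periodicPts_of_isPeriodicPt_iterate (mk_mem_periodicPts hi0 h0i)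
      (hπ_iter m ▸ (isPeriodicPt_minimalPeriod f _).map hπ)
  set g := i.gcd n
  have hg : IsPeriodicPt fbar g 0 := h0i.gcd h0n
  have hgn : g < n := (Nat.gcd_le_right i hn).lt_of_ne fun h ↦ hi (h ▸ Nat.gcd_dvd_left i n)
  -- `m ≤ m * i` puts `x` on the cycle and `i ∣ m * i` puts it in `M`.
  set x := f^[m * i] 0
  have hxn : minimalPeriod f x = n := by
    rw [show x = f^[m * i - m] (f^[m] 0) by
      rw [← iterate_add_apply, Nat.sub_add_cancel (Nat.le_mul_of_pos_right m hi0)]]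
    exact minimalPeriod_apply_iterate hp _
  have hx0 : π x = 0 := by rw [hπ_iter]; exact (h0i.const_mul m).eq
  have hgx0 : π (f^[g] x) = 0 := by
    rw [← iterate_add_apply, hπ_iter, iterate_add_apply, ← hπ_iter, hx0, hg.eq]
  have hx : IsPeriodicPt f n x := hxn ▸ isPeriodicPt_minimalPeriod f x
  refine not_isPeriodicPt_of_pos_of_lt_minimalPeriod (Nat.gcd_pos_of_pos_left n hi0).ne'
    (hxn.symm ▸ hgn) (eq_of_isPeriodicPt_of_mem hM hd hn (hx.apply_iterate g) hx ?_ ?_)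
  · exact Ideal.Quotient.eq_zero_iff_mem.1 hgx0
  · exact Ideal.Quotient.eq_zero_iff_mem.1 hx0

end

theorem orbit_elem_isUnit_of_not_dvd_general {K : Type*} [Field K]
    (d m n : ℕ) (hd : 2 ≤ d) (hn : 1 ≤ n)
    (c : 𝓞 K)
    (f : 𝓞 K → 𝓞 K) (hf : f = fun x => x ^ d + c)
    (a : ℕ → 𝓞 K) (ha : ∀ i, a i = f^[i] 0)
    (hper : f^[m + n] 0 = f^[m] 0)
    (hmin : ∀ n', 0 < n' → n' < n → f^[m + n'] 0 ≠ f^[m] 0)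
    (i : ℕ) (hni : ¬ n ∣ i) :
    IsUnit (a i) := by
  subst hf
  have hp : IsPeriodicPt (· ^ d + c) n ((· ^ d + c)^[m] 0) := by
    rw [IsPeriodicPt, IsFixedPt, ← iterate_add_apply, add_comm]
    exact hper
  have hpn : minimalPeriod (· ^ d + c) ((· ^ d + c)^[m] 0) = n :=
    minimalPeriod_eq_of_isPeriodicPt hn hp fun k hk hkn h ↦
      hmin k hk hkn (by rwa [add_comm, iterate_add_apply])
  rw [ha]
  exact isUnit_iterate_zero_of_not_dvd hd (mk_mem_periodicPts hn hp) (hpn ▸ hni)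

/-- Let `f(x) = x^d + c` be post-critically finite with exact type `(m,n)`,
`m ≥ 1`, `K = ℚ(c)`, `a_i = f^i(0) ∈ 𝓞 K`. If `n` does not divide `i`, then `a_i` is
a unit in `𝓞 K`. -/
theorem orbit_elem_isUnit_of_not_dvd {K : Type*} [Field K] [NumberField K]
    (d m n : ℕ) (hd : 2 ≤ d) (hm : 1 ≤ m) (hn : 1 ≤ n)
    (c : 𝓞 K)
    (hK : IntermediateField.adjoin ℚ {algebraMap (𝓞 K) K c} = ⊤)
    (f : 𝓞 K → 𝓞 K) (hf : f = fun x => x ^ d + c)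
    (a : ℕ → 𝓞 K) (ha : ∀ i, a i = f^[i] 0)
    (hper : f^[m + n] 0 = f^[m] 0)
    (hmin : ∀ n', 0 < n' → n' < n → f^[m + n'] 0 ≠ f^[m] 0)
    (htail : ∀ k, k < m → f^[k + n] 0 ≠ f^[k] 0)
    (i : ℕ) (hi : 1 ≤ i) (hni : ¬ n ∣ i) :
    IsUnit (a i) :=
  orbit_elem_isUnit_of_not_dvd_general d m n hd hn c f hf a ha hper hmin i hni
end

section
/- Let d be a prime and f(x) = x^d + c post-critically finite with exact type (m,n), m ≥ 1, and suppose n does not divide m−1. If n divides i, then (a_i)^A = (d) as ideals of O_K, where A = d^{m−1}(d−1), K = ℚ(c), a_i = f^i(0). -/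
/-!
Write `a k` for the critical orbit of `x ↦ x ^ d + c` and `B k = a (k + i) - a k`. Since
`a (m + i) = a m` while `a (m - 1 + i) ≠ a (m - 1)`, the two `d`-th roots `a (m - 1 + i)` and
`a (m - 1)` of the same number differ by a primitive `d`-th root of unity `ζ`, so
`B (m - 1) = (ζ - 1) * a (m - 1)`, and `(ζ - 1) ^ (d - 1)` is associated to `d`.

Fix a nonzero prime `P` and write `v` for the exponent of `P`. Because
`B (k + 1) = (a k + B k) ^ d - a k ^ d = B k ^ d + d * B k * r`, the value `v (B k)` is multiplied
by `d` as long as it is below `v (ζ - 1)` and overshoots `v (ζ - 1)` once it reaches it. If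
`P ∣ a i`, rigid divisibility of the critical orbit (the indices `j` with `a j ∈ P` are exactly the
multiples of `n`) and `n ∤ m - 1` give `a (m - 1) ∉ P`, hence
`v (ζ - 1) = v (B (m - 1)) = d ^ (m - 1) * v (a i)`. If `P ∤ a i`, then `P ∤ d`: otherwise
`B (k + 1) ≡ B k ^ d` modulo `P` would carry `B (m - 1) ∈ P` back to `a i = B 0 ∈ P`.
-/

open NumberField Function Polynomial Finset UniqueFactorizationMonoid

theorem Function.isPeriodicPt_iterate_of_mem_periodicPts {α : Type*} {f : α → α} {x : α}
    {k m n : ℕ} (hm : IsPeriodicPt f n (f^[m] x)) (hk : f^[k] x ∈ periodicPts f) :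
    IsPeriodicPt f n (f^[k] x) := by
  rcases le_total k m with h | h
  · obtain ⟨j, rfl⟩ := Nat.exists_eq_add_of_le' h
    rw [iterate_add_apply] at hm
    rw [isPeriodicPt_iff_minimalPeriod_dvd, ← minimalPeriod_apply_iterate hk j]
    exact hm.minimalPeriod_dvd
  · obtain ⟨j, rfl⟩ := Nat.exists_eq_add_of_le' h
    rw [iterate_add_apply]
    exact hm.apply_iterate j

theorem Ideal.geom_sum₂_mem {R : Type*} [CommRing R] {I : Ideal R} {x y : R} (hx : x ∈ I)
    (hy : y ∈ I) {d : ℕ} (hd : d ≠ 1) : ∑ i ∈ range d, x ^ i * y ^ (d - 1 - i) ∈ I := by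
  refine I.sum_mem fun i hi ↦ ?_
  rcases Nat.eq_zero_or_pos i with rfl | hi0
  · simpa using I.pow_mem_of_mem hy (d - 1) (by have := mem_range.mp hi; omega)
  · exact I.mul_mem_right _ (I.pow_mem_of_mem hx i hi0)

section CriticalOrbit

variable {R : Type*} [CommRing R] {d : ℕ} {c : R}

variable (d c) in
def critOrbit (k : ℕ) : R := (fun x ↦ x ^ d + c)^[k] 0

@[simp]
theorem critOrbit_zero : critOrbit d c 0 = 0 := rfl

theorem critOrbit_succ (k : ℕ) : critOrbit d c (k + 1) = critOrbit d c k ^ d + c :=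
  iterate_succ_apply' _ _ _

theorem critOrbit_add (l k : ℕ) :
    critOrbit d c (l + k) = (fun x ↦ x ^ d + c)^[l] (critOrbit d c k) :=
  iterate_add_apply _ _ _ _

theorem critOrbit_add_eq_iff {k l : ℕ} : critOrbit d c (k + l) = critOrbit d c k ↔
    IsPeriodicPt (fun x ↦ x ^ d + c) l (critOrbit d c k) := by
  rw [add_comm, critOrbit_add]
  rfl

theorem critOrbit_add_of_le {m n k l : ℕ} (hper : critOrbit d c (m + n) = critOrbit d c m)
    (hk : m ≤ k) (hl : n ∣ l) : critOrbit d c (k + l) = critOrbit d c k := by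
  obtain ⟨j, rfl⟩ := Nat.exists_eq_add_of_le' hk
  obtain ⟨t, rfl⟩ := hl
  rw [critOrbit_add_eq_iff] at hper ⊢
  rw [critOrbit_add]
  exact (hper.apply_iterate j).mul_const t

theorem critOrbit_add_ne_of_lt {m n i k : ℕ} (hper : critOrbit d c (m + n) = critOrbit d c m)
    (htail : ∀ k < m, critOrbit d c (k + n) ≠ critOrbit d c k) (hi : 0 < i) (hk : k < m) :
    critOrbit d c (k + i) ≠ critOrbit d c k := by
  intro h
  apply htail k hk
  rw [critOrbit_add_eq_iff] at hper h ⊢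
  exact isPeriodicPt_iterate_of_mem_periodicPts (x := 0) hper ⟨i, hi, h⟩

theorem critOrbit_add_sub_eq_mul_prod (e k t : ℕ) :
    critOrbit d c (k + t + e) - critOrbit d c (k + t) =
      (critOrbit d c (k + e) - critOrbit d c k) * ∏ j ∈ range t,
        ∑ i ∈ range d, critOrbit d c (k + j + e) ^ i * critOrbit d c (k + j) ^ (d - 1 - i) := by
  induction t with
  | zero => simp
  | succ t ih =>
    rw [prod_range_succ, ← mul_assoc, ← ih, show k + (t + 1) + e = k + t + e + 1 by omega,
      ← add_assoc, critOrbit_succ, critOrbit_succ, add_sub_add_right_eq_sub, ← geom_sum₂_mul,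
      mul_comm]

theorem critOrbit_mem_iff_of_mem {I : Ideal R} {e : ℕ} (he : critOrbit d c e ∈ I) (r q : ℕ) :
    critOrbit d c (r + e * q) ∈ I ↔ critOrbit d c r ∈ I := by
  induction q with
  | zero => simp
  | succ q ih =>
    have hsub : critOrbit d c (r + e * q + e) - critOrbit d c (r + e * q) ∈ I := by
      have h := critOrbit_add_sub_eq_mul_prod (d := d) (c := c) e 0 (r + e * q)
      simp only [zero_add, critOrbit_zero, sub_zero] at h
      exact h ▸ I.mul_mem_right _ he
    rw [mul_add_one, ← add_assoc, ← ih, ← sub_add_cancel (critOrbit d c (r + e * q + e)),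
      I.add_mem_iff_right hsub]

theorem critOrbit_mem_iff_dvd {I : Ideal R} {e : ℕ} (he : 0 < e) (heI : critOrbit d c e ∈ I)
    (hmin : ∀ j, 0 < j → j < e → critOrbit d c j ∉ I) (k : ℕ) :
    critOrbit d c k ∈ I ↔ e ∣ k := by
  have h := critOrbit_mem_iff_of_mem heI (k % e) (k / e)
  rw [Nat.mod_add_div] at h
  rw [h, Nat.dvd_iff_mod_eq_zero]
  refine ⟨fun hk ↦ ?_, fun hk ↦ by simp [hk]⟩
  by_contra hne
  exact hmin _ (Nat.pos_of_ne_zero hne) (Nat.mod_lt k he) hk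

variable [IsDomain R] {m n : ℕ}

theorem eq_of_critOrbit_mem_iff_dvd (hd : d ≠ 1) (hn : 0 < n)
    (hper : critOrbit d c (m + n) = critOrbit d c m)
    (hmin : ∀ e, 0 < e → e < n → critOrbit d c (m + e) ≠ critOrbit d c m)
    {I : Ideal R} (hI : I ≠ ⊤) {e : ℕ} (he : 0 < e) (hiff : ∀ k, critOrbit d c k ∈ I ↔ e ∣ k) :
    e = n := by
  have hen : e ∣ n := by
    have h := critOrbit_add_of_le hper (Nat.le_mul_of_pos_left m he) (dvd_refl n)
    have : e ∣ e * m + n := (hiff _).mp (h ▸ (hiff _).mpr (dvd_mul_right e m))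
    exact (Nat.dvd_add_right (dvd_mul_right e m)).mp this
  by_contra hne
  have hlt : e < n := lt_of_le_of_ne (Nat.le_of_dvd hn hen) hne
  set C := fun j ↦
    ∑ i ∈ range d, critOrbit d c (m + j + e) ^ i * critOrbit d c (m + j) ^ (d - 1 - i)
  -- The nonzero difference `critOrbit d c (m + e) - critOrbit d c m` recurs after one period, so
  -- the multipliers `C j` of one period multiply to `1`; but the one at a multiple of `e` is in `I`.
  have hprod : ∏ j ∈ range n, C j = 1 := by
    have h := critOrbit_add_sub_eq_mul_prod (d := d) (c := c) e m n
    rw [add_right_comm, critOrbit_add_of_le hper (by omega) (dvd_refl n), hper] at h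
    exact (mul_eq_left₀ (sub_ne_zero.mpr (hmin e he hlt))).mp h.symm
  obtain ⟨j, hj, hej⟩ : ∃ j < n, e ∣ m + j := by
    have := Nat.div_add_mod m e
    have := Nat.mod_lt m he
    refine ⟨e * (m / e + 1) - m, ?_, m / e + 1, ?_⟩ <;> rw [mul_add_one] <;> omega
  have hC : C j ∈ I := Ideal.geom_sum₂_mem ((hiff _).mpr (hej.add dvd_rfl)) ((hiff _).mpr hej) hd
  exact hI (I.eq_top_of_isUnit_mem hC
    (isUnit_of_dvd_one (hprod ▸ dvd_prod_of_mem C (mem_range.mpr hj))))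

theorem dvd_of_critOrbit_mem (hd : d ≠ 1) (hn : 0 < n)
    (hper : critOrbit d c (m + n) = critOrbit d c m)
    (hmin : ∀ e, 0 < e → e < n → critOrbit d c (m + e) ≠ critOrbit d c m)
    {I : Ideal R} (hI : I ≠ ⊤) {j : ℕ} (hj : 0 < j) (hjI : critOrbit d c j ∈ I) {k : ℕ}
    (hk : critOrbit d c k ∈ I) : n ∣ k := by
  classical
  have hex : ∃ e, 0 < e ∧ critOrbit d c e ∈ I := ⟨j, hj, hjI⟩
  obtain ⟨he, heI⟩ := Nat.find_spec hex
  have hiff := critOrbit_mem_iff_dvd he heI fun j hj hje hjI ↦ Nat.find_min hex hje ⟨hj, hjI⟩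
  rw [← eq_of_critOrbit_mem_iff_dvd hd hn hper hmin hI he hiff]
  exact (hiff k).mp hk

end CriticalOrbit

theorem IsPrimitiveRoot.associated_sub_one_pow_prime {R : Type*} [CommRing R] [IsDomain R]
    {p : ℕ} [hp : Fact p.Prime] {ζ : R} (hζ : IsPrimitiveRoot ζ p) :
    Associated ((ζ - 1) ^ (p - 1)) (p : R) := by
  rw [← eval_one_cyclotomic_prime (R := R) (p := p), cyclotomic_eq_prod_X_sub_primitiveRoots hζ,
    eval_prod]
  simp only [eval_sub, eval_X, eval_C]
  rw [← Nat.totient_prime hp.out, ← hζ.card_primitiveRoots, ← prod_const]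
  refine Associated.prod _ _ _ fun η hη ↦ ?_
  obtain ⟨i, -, hi, rfl⟩ := hζ.isPrimitiveRoot_iff.mp ((mem_primitiveRoots hp.out.pos).mp hη)
  simpa using (hζ.associated_sub_one_pow_sub_one_of_coprime hi).neg_right

theorem exists_pow_eq_one_mul_of_pow_eq_pow {R : Type*} [CommRing R] [IsDomain R]
    [IsIntegrallyClosed R] {d : ℕ} (hd : d ≠ 0) {x y : R} (h : x ^ d = y ^ d) :
    ∃ ζ : R, ζ ^ d = 1 ∧ x = ζ * y := by
  rcases eq_or_ne y 0 with rfl | hy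
  · exact ⟨1, one_pow d, by rw [mul_zero]; exact (pow_eq_zero_iff hd).mp (h.trans (zero_pow hd))⟩
  let φ := algebraMap R (FractionRing R)
  have hφy : φ y ≠ 0 := (map_ne_zero_iff φ (IsFractionRing.injective R _)).mpr hy
  have hz : (φ x / φ y) ^ d = 1 := by
    rw [div_pow, div_eq_one_iff_eq (pow_ne_zero d hφy), ← map_pow, ← map_pow, h]
  obtain ⟨ζ, hζ⟩ := (IsIntegrallyClosed.isIntegral_iff (R := R) (x := φ x / φ y)).mp
    ⟨X ^ d - C 1, monic_X_pow_sub_C 1 hd, by simp [hz]⟩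
  have hφ := IsFractionRing.injective R (FractionRing R)
  exact ⟨ζ, hφ (by rw [map_pow, hζ, hz, map_one]), hφ (by rw [map_mul, hζ, div_mul_cancel₀ _ hφy])⟩

theorem eq_pow_mul_of_le_of_step {s : ℕ → ℕ} {d u N : ℕ}
    (hlt : ∀ k < N, s k < u → s (k + 1) = d * s k)
    (hge : ∀ k < N, u ≤ s k → u < s (k + 1)) :
    ∀ k ≤ N, s k ≤ u → s k = d ^ k * s 0 := by
  intro k
  induction k with
  | zero => simp
  | succ k ih =>
    intro hk hsu
    have hsk : s k < u := by
      by_contra! h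
      exact (hge k hk h).not_ge hsu
    rw [hlt k hk hsk, ih (by omega) hsk.le, pow_succ]
    ring

theorem Ideal.add_pow_sub_pow_mem_iff {R : Type*} [CommRing R] {P : Ideal R} [hPp : P.IsPrime]
    {d : ℕ} (hd : d.Prime) (hdP : (d : R) ∈ P) (x b : R) :
    (x + b) ^ d - x ^ d ∈ P ↔ b ∈ P := by
  obtain ⟨r, hr⟩ := exists_add_pow_prime_eq hd x b
  rw [hr, add_assoc, add_sub_cancel_left,
    Ideal.add_mem_iff_left _ (P.mul_mem_right _ (P.mul_mem_right _ (P.mul_mem_right _ hdP))),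
    hPp.pow_mem_iff_mem d hd.pos]

namespace Ideal

variable {R : Type*} [CommRing R] [IsDedekindDomain R]

noncomputable def ord (P : Ideal R) (x : R) : ℕ := (normalizedFactors (span {x})).count P

theorem ord_pow (P : Ideal R) (x : R) (k : ℕ) : ord P (x ^ k) = k * ord P x := by
  rw [ord, ord, ← span_singleton_pow, normalizedFactors_pow, Multiset.count_nsmul]

theorem ord_mul (P : Ideal R) {x y : R} (hx : x ≠ 0) (hy : y ≠ 0) :
    ord P (x * y) = ord P x + ord P y := by
  rw [ord, ord, ord, ← span_singleton_mul_span_singleton,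
    normalizedFactors_mul (by simpa using hx) (by simpa using hy), Multiset.count_add]

theorem ord_eq_of_associated (P : Ideal R) {x y : R} (h : Associated x y) :
    ord P x = ord P y := by
  rw [ord, ord, span_singleton_eq_span_singleton.mpr h]

theorem span_singleton_eq_span_singleton_of_ord_eq {x y : R} (hx : x ≠ 0) (hy : y ≠ 0)
    (h : ∀ P : Ideal R, P.IsPrime → P ≠ ⊥ → ord P x = ord P y) : span {x} = span {y} := by
  rw [← associated_iff_eq,
    associated_iff_normalizedFactors_eq_normalizedFactors (by simpa using hx) (by simpa using hy)]
  ext Q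
  by_cases hQ : Q ∈ normalizedFactors (span {x}) ∨ Q ∈ normalizedFactors (span {y})
  · have hQ' : Prime Q := hQ.elim (prime_of_normalized_factor Q) (prime_of_normalized_factor Q)
    exact h Q (isPrime_of_prime hQ') hQ'.ne_zero
  · rw [not_or] at hQ
    rw [Multiset.count_eq_zero_of_notMem hQ.1, Multiset.count_eq_zero_of_notMem hQ.2]

variable {P : Ideal R} [hPp : P.IsPrime]

theorem mem_pow_iff_le_ord (hP : P ≠ ⊥) {x : R} (hx : x ≠ 0) {l : ℕ} :
    x ∈ P ^ l ↔ l ≤ ord P x := by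
  rw [← span_singleton_le_iff_mem, ← dvd_iff_le, pow_dvd_iff_le_emultiplicity,
    emultiplicity_eq_count_normalizedFactors (prime_of_isPrime hP hPp).irreducible
      (by simpa using hx), normalize_eq, Nat.cast_le, ord]

theorem ord_eq_zero_iff (hP : P ≠ ⊥) {x : R} (hx : x ≠ 0) : ord P x = 0 ↔ x ∉ P := by
  have h := mem_pow_iff_le_ord hP hx (l := 1)
  rw [pow_one] at h
  rw [h, not_le, Nat.lt_one_iff]

theorem ord_add_eq_of_mem_pow (hP : P ≠ ⊥) {x y : R} (hx : x ≠ 0)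
    (hy : y ∈ P ^ (ord P x + 1)) : ord P (x + y) = ord P x := by
  have hx' : x ∉ P ^ (ord P x + 1) := by simp [mem_pow_iff_le_ord hP hx]
  have hxy : x + y ≠ 0 := fun h ↦ hx' (by simpa [eq_neg_of_add_eq_zero_left h] using hy)
  refine le_antisymm ?_ ((mem_pow_iff_le_ord hP hxy).mp
    (add_mem ((mem_pow_iff_le_ord hP hx).mpr le_rfl) (pow_le_pow_right (by omega) hy)))
  by_contra! hlt
  exact hx' (by simpa using sub_mem ((mem_pow_iff_le_ord hP hxy).mpr hlt) hy)

variable {d : ℕ}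

theorem add_pow_sub_pow_sub_pow_mem (hP : P ≠ ⊥) (hd : d.Prime) (hd0 : (d : R) ≠ 0)
    (x : R) {b : R} (hb : b ≠ 0) : (x + b) ^ d - x ^ d - b ^ d ∈ P ^ (ord P d + ord P b) := by
  obtain ⟨r, hr⟩ := exists_add_pow_prime_eq hd x b
  have h : (x + b) ^ d - x ^ d - b ^ d = d * b * (x * r) := by rw [hr]; ring
  rw [h, pow_add]
  exact mul_mem_right _ _ (mul_mem_mul ((mem_pow_iff_le_ord hP hd0).mpr le_rfl)
    ((mem_pow_iff_le_ord hP hb).mpr le_rfl))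

theorem min_le_ord_add_pow_sub_pow (hP : P ≠ ⊥) (hd : d.Prime) (hd0 : (d : R) ≠ 0)
    {x b : R} (hb : b ≠ 0) (hne : (x + b) ^ d - x ^ d ≠ 0) :
    min (d * ord P b) (ord P d + ord P b) ≤ ord P ((x + b) ^ d - x ^ d) := by
  have hbd : b ^ d ∈ P ^ (d * ord P b) :=
    (mem_pow_iff_le_ord hP (pow_ne_zero d hb)).mpr (ord_pow P b d).ge
  rw [← mem_pow_iff_le_ord hP hne, ← sub_add_cancel ((x + b) ^ d - x ^ d) (b ^ d)]
  exact add_mem (pow_le_pow_right (min_le_right _ _) (add_pow_sub_pow_sub_pow_mem hP hd hd0 x hb))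
    (pow_le_pow_right (min_le_left _ _) hbd)

theorem ord_add_pow_sub_pow_of_lt (hP : P ≠ ⊥) (hd : d.Prime) (hd0 : (d : R) ≠ 0)
    {x b : R} (hb : b ≠ 0) (h : d * ord P b < ord P d + ord P b) :
    ord P ((x + b) ^ d - x ^ d) = d * ord P b := by
  have hmem : (x + b) ^ d - x ^ d - b ^ d ∈ P ^ (ord P (b ^ d) + 1) := by
    rw [ord_pow]
    exact pow_le_pow_right h (add_pow_sub_pow_sub_pow_mem hP hd hd0 x hb)
  rw [← sub_add_cancel ((x + b) ^ d - x ^ d) (b ^ d), add_comm,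
    ord_add_eq_of_mem_pow hP (pow_ne_zero d hb) hmem, ord_pow]

variable {x B : ℕ → R} {N : ℕ}

theorem ord_chain_eq_pow_mul (hP : P ≠ ⊥) (hd : d.Prime) (hd0 : (d : R) ≠ 0)
    (hB : ∀ k, B (k + 1) = (x k + B k) ^ d - x k ^ d) (hB0 : ∀ k ≤ N, B k ≠ 0)
    {u : ℕ} (hu : 0 < u) (hV : ord P d = (d - 1) * u) (hN : ord P (B N) ≤ u) :
    ord P (B N) = d ^ N * ord P (B 0) := by
  have hd2 := hd.two_le
  refine eq_pow_mul_of_le_of_step (s := fun k ↦ ord P (B k)) (fun k hk hlt ↦ ?_)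
    (fun k hk hge ↦ ?_) N le_rfl hN
  · rw [hB]
    refine ord_add_pow_sub_pow_of_lt hP hd hd0 (hB0 k hk.le) ?_
    have : (d - 1) * ord P (B k) < (d - 1) * u := Nat.mul_lt_mul_of_pos_left hlt (by omega)
    have : d * ord P (B k) = (d - 1) * ord P (B k) + ord P (B k) := by
      rw [Nat.sub_mul, one_mul, Nat.sub_add_cancel (Nat.le_mul_of_pos_left _ (by omega))]
    omega
  · have hmin := min_le_ord_add_pow_sub_pow hP hd hd0 (hB0 k hk.le) (hB k ▸ hB0 (k + 1) hk)
    rw [← hB] at hmin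
    have : 2 * ord P (B k) ≤ d * ord P (B k) := Nat.mul_le_mul_right _ hd2
    have : u ≤ (d - 1) * u := Nat.le_mul_of_pos_left u (by omega)
    omega

theorem ord_chain_mul_eq_ord_natCast (hP : P ≠ ⊥) (hd : d.Prime) {ζ y : R}
    (hζ : IsPrimitiveRoot ζ d) (hB : ∀ k, B (k + 1) = (x k + B k) ^ d - x k ^ d)
    (hB0 : ∀ k ≤ N, B k ≠ 0) (hBN : B N = (ζ - 1) * y) (hy : B 0 ∈ P → y ∉ P) :
    d ^ N * (d - 1) * ord P (B 0) = ord P d := by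
  have := Fact.mk hd
  have hζy : (ζ - 1) * y ≠ 0 := hBN ▸ hB0 N le_rfl
  have hζ1 : ζ - 1 ≠ 0 := left_ne_zero_of_mul hζy
  have hy0 : y ≠ 0 := right_ne_zero_of_mul hζy
  have hassoc := hζ.associated_sub_one_pow_prime
  have hd0 : (d : R) ≠ 0 := hassoc.ne_zero_iff.mp (pow_ne_zero _ hζ1)
  have hV : ord P d = (d - 1) * ord P (ζ - 1) := by
    rw [← ord_eq_of_associated P hassoc, ord_pow]
  by_cases h0 : B 0 ∈ P
  · have hdvd : ∀ k, B 0 ∣ B k := by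
      intro k
      induction k with
      | zero => exact dvd_rfl
      | succ k ih => exact ih.trans (hB k ▸ by simpa using sub_dvd_pow_sub_pow (x k + B k) (x k) d)
    have hζP : ζ - 1 ∈ P :=
      (hPp.mem_or_mem (hBN ▸ mem_of_dvd P (hdvd N) h0)).resolve_right (hy h0)
    have hsN : ord P (B N) = ord P (ζ - 1) := by
      rw [hBN, ord_mul P hζ1 hy0, (ord_eq_zero_iff hP hy0).mpr (hy h0), add_zero]
    have hu : 0 < ord P (ζ - 1) := Nat.pos_of_ne_zero fun h ↦ (ord_eq_zero_iff hP hζ1).mp h hζP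
    rw [hV, ← hsN, ord_chain_eq_pow_mul hP hd hd0 hB hB0 hu hV hsN.le]
    ring
  · have hζP : ζ - 1 ∉ P := by
      intro hζP
      have hdP : (d : R) ∈ P :=
        mem_of_dvd P (sub_one_dvd_natCast_of_pow_eq_one hζ.pow_eq_one (sub_ne_zero.mp hζ1)) hζP
      have hmem : ∀ k, B k ∈ P ↔ B 0 ∈ P := by
        intro k
        induction k with
        | zero => rfl
        | succ k ih => rw [hB, add_pow_sub_pow_mem_iff hd hdP, ih]
      exact h0 ((hmem N).mp (hBN ▸ P.mul_mem_right y hζP))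
    rw [hV, (ord_eq_zero_iff hP hζ1).mpr hζP, (ord_eq_zero_iff hP (hB0 0 N.zero_le)).mpr h0]
    simp

end Ideal

theorem span_orbit_pow_eq_span_d_of_not_dvd_general {K : Type*} [Field K] [NumberField K]
    (d m n : ℕ) (hd : d.Prime) (hm : 1 ≤ m) (hn : 1 ≤ n)
    (c : 𝓞 K)
    (f : 𝓞 K → 𝓞 K) (hf : f = fun x => x ^ d + c)
    (a : ℕ → 𝓞 K) (ha : ∀ i, a i = f^[i] 0)
    (hper : f^[m + n] 0 = f^[m] 0)
    (hmin : ∀ n', 0 < n' → n' < n → f^[m + n'] 0 ≠ f^[m] 0)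
    (htail : ∀ k, k < m → f^[k + n] 0 ≠ f^[k] 0)
    (hnm : ¬ n ∣ (m - 1))
    (i : ℕ) (hi : 1 ≤ i) (hni : n ∣ i) :
    (Ideal.span {a i}) ^ (d ^ (m - 1) * (d - 1)) = Ideal.span {(d : 𝓞 K)} := by
  subst hf
  obtain rfl : a = critOrbit d c := funext ha
  change critOrbit d c (m + n) = critOrbit d c m at hper
  change ∀ e, 0 < e → e < n → critOrbit d c (m + e) ≠ critOrbit d c m at hmin
  change ∀ k < m, critOrbit d c (k + n) ≠ critOrbit d c k at htail
  have hstrict : ∀ k < m, critOrbit d c (k + i) ≠ critOrbit d c k :=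
    fun k ↦ critOrbit_add_ne_of_lt hper htail hi
  obtain ⟨ζ, hζd, hζ⟩ := exists_pow_eq_one_mul_of_pow_eq_pow hd.ne_zero
    (x := critOrbit d c (m - 1 + i)) (y := critOrbit d c (m - 1)) <| by
      have h := critOrbit_add_of_le hper le_rfl hni
      rw [← Nat.sub_add_cancel hm, add_right_comm, critOrbit_succ, critOrbit_succ] at h
      exact add_right_cancel h
  have hζ1 : ζ ≠ 1 := fun h ↦ hstrict (m - 1) (by omega) (by rw [hζ, h, one_mul])
  have hprim : IsPrimitiveRoot ζ d :=
    IsPrimitiveRoot.iff_orderOf.mpr (orderOf_eq_prime (hp := ⟨hd⟩) hζd hζ1)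
  rw [Ideal.span_singleton_pow]
  refine Ideal.span_singleton_eq_span_singleton_of_ord_eq
    (pow_ne_zero _ (by simpa using hstrict 0 hm)) (Nat.cast_ne_zero.mpr hd.ne_zero)
    fun P hP hP0 ↦ ?_
  rw [Ideal.ord_pow]
  simpa using Ideal.ord_chain_mul_eq_ord_natCast hP0 hd hprim (x := critOrbit d c)
    (B := fun k ↦ critOrbit d c (k + i) - critOrbit d c k) (N := m - 1)
    (fun k ↦ by simp only [add_right_comm k 1 i, critOrbit_succ]; ring)
    (fun k hk ↦ sub_ne_zero.mpr (hstrict k (by omega))) (by rw [hζ]; ring)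
    fun hiP hm1P ↦ hnm (dvd_of_critOrbit_mem hd.ne_one hn hper hmin hP.ne_top hi
      (by simpa using hiP) hm1P)

/-- Let `d` be a prime and `f(x) = x^d + c` post-critically finite with
exact type `(m,n)`, `m ≥ 1`, and suppose `n ∤ m−1`. If `n ∣ i`, then
`(a_i)^A = (d)` as ideals of `𝓞 K`, where `A = d^(m−1)·(d−1)`, `K = ℚ(c)`,
`a_i = f^i(0)`. -/
theorem span_orbit_pow_eq_span_d_of_not_dvd {K : Type*} [Field K] [NumberField K]
    (d m n : ℕ) (hd : d.Prime) (hm : 1 ≤ m) (hn : 1 ≤ n)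
    (c : 𝓞 K)
    (hK : IntermediateField.adjoin ℚ {algebraMap (𝓞 K) K c} = ⊤)
    (f : 𝓞 K → 𝓞 K) (hf : f = fun x => x ^ d + c)
    (a : ℕ → 𝓞 K) (ha : ∀ i, a i = f^[i] 0)
    (hper : f^[m + n] 0 = f^[m] 0)
    (hmin : ∀ n', 0 < n' → n' < n → f^[m + n'] 0 ≠ f^[m] 0)
    (htail : ∀ k, k < m → f^[k + n] 0 ≠ f^[k] 0)
    (hnm : ¬ n ∣ (m - 1))
    (i : ℕ) (hi : 1 ≤ i) (hni : n ∣ i) :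
    (Ideal.span {a i}) ^ (d ^ (m - 1) * (d - 1)) = Ideal.span {(d : 𝓞 K)} :=
  span_orbit_pow_eq_span_d_of_not_dvd_general d m n hd hm hn c f hf a ha hper hmin htail hnm i hi
    hni
end

section
/- Let d be a prime and suppose f(x) = x^d + c has exact type (m,1) with m ≥ 1 (a fixed point in the post-critical orbit). Set K = ℚ(c). Then f is stable over K, i.e., f^n(x) is irreducible over K for all n ≥ 1. -/
/-!
Write `f = x ^ d + c`. Its critical orbit is `f^[k + 1] 0 = c * v_k(c)` for explicit monic
`v_k ∈ ℤ[X]`, and `f^[m + 1] 0 = f^[m] 0 ≠ f^[m - 1] 0` forces `c` to be a root of the geometric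
sum `T = ∑ v_{m-1}^i v_{m-2}^(d-1-i)`, since `v_m - v_{m-1} = X^(d-1) T (v_{m-1} - v_{m-2})`.
Modulo `d`, Frobenius turns every `v_{k+1} - v_k` into a power of `X`, hence so is `T`, whose
constant term is `d`: `T` is Eisenstein at `d`. As `K = ℚ(c)`, `T` is the minimal polynomial of
`c`, so `|N(c)| = d` and `c` is a prime of `𝓞 K`. Finally every iterate `f^N` is Eisenstein at
`(c)`: it reduces to `X ^ d ^ N`, and its constant term `f^[N] 0 = (f^[N-1] 0) ^ d + c` lies in
`c + (c ^ 2)`.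
-/

open Polynomial NumberField IntermediateField

namespace Polynomial

theorem Monic.irreducible_of_map_eq_X_pow {R S : Type*} [CommRing R] [IsDomain R] [CommRing S]
    [IsDomain S] {φ : R →+* S} {f : R[X]} (hf : f.Monic) (hpos : 0 < f.natDegree)
    (hmap : f.map φ = X ^ f.natDegree) (h0 : f.coeff 0 ∉ RingHom.ker φ ^ 2) :
    Irreducible f := by
  refine IsEisensteinAt.irreducible ?_ (RingHom.ker_isPrime φ) hf.isPrimitive hpos
  refine hf.isEisensteinAt_of_mem_of_notMem (RingHom.ker_ne_top φ) (fun {n} hn => ?_) h0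
  simpa [coeff_map, coeff_X_pow, hn.ne] using congrArg (coeff · n) hmap

theorem Monic.eq_X_pow_of_dvd_X_pow {R : Type*} [CommRing R] [IsDomain R] {p : R[X]}
    (hp : p.Monic) {n : ℕ} (h : p ∣ X ^ n) : p = X ^ p.natDegree := by
  obtain ⟨i, -, hi⟩ := (dvd_prime_pow prime_X n).1 h
  obtain rfl := eq_of_monic_of_associated hp (monic_X_pow i) hi
  rw [natDegree_X_pow]

theorem IsMonicOfDegree.monic_geom_sum₂ {R : Type*} [CommRing R] {p q : R[X]} {a b : ℕ}
    (hp : IsMonicOfDegree p a) (hq : IsMonicOfDegree q b) (hba : b < a) {n : ℕ} (hn : n ≠ 0) :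
    (∑ i ∈ Finset.range n, p ^ i * q ^ (n - 1 - i)).Monic := by
  have hsub : (p - q).Monic := (hp.sub (hq.natDegree_eq.trans_lt hba)).monic
  have hpow : (p ^ n - q ^ n).Monic := by
    refine ((hp.pow n).sub ?_).monic
    exact (hq.pow n).natDegree_eq.trans_lt (Nat.mul_lt_mul_of_pos_right hba (by omega))
  exact hsub.of_mul_monic_right (by rwa [geom_sum₂_mul])

theorem map_iterate_comp {R S : Type*} [Semiring R] [Semiring S] (φ : R →+* S) (p q : R[X])
    (k : ℕ) : (p.comp^[k] q).map φ = (p.map φ).comp^[k] (q.map φ) := by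
  induction k with
  | zero => rfl
  | succ k ih => rw [Function.iterate_succ_apply', Function.iterate_succ_apply', map_comp, ih]

theorem iterate_X_pow_comp_X {R : Type*} [Semiring R] (d k : ℕ) :
    (X ^ d : R[X]).comp^[k] X = X ^ d ^ k := by
  induction k with
  | zero => simp
  | succ k ih => rw [Function.iterate_succ_apply', ih, X_pow_comp, ← pow_mul, ← pow_succ]

end Polynomial

namespace NumberField

theorem natAbs_norm_eq_natAbs_coeff_zero_minpoly {K : Type*} [Field K] [NumberField K]
    {x : 𝓞 K} (hx : ℚ⟮(x : K)⟯ = ⊤) :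
    (Algebra.norm ℤ x).natAbs = ((minpoly ℤ x).coeff 0).natAbs := by
  have hint : IsIntegral ℚ (x : K) := .of_finite ℚ _
  have hnorm : (Algebra.norm ℤ x : ℚ)
      = (-1) ^ (adjoin.powerBasis hint).dim * ((minpoly ℤ x).coeff 0 : ℚ) := by
    rw [Algebra.coe_norm_int, Algebra.norm_eq_norm_adjoin, finrank_eq_one_iff_eq_top.mpr hx,
      pow_one, ← adjoin.powerBasis_gen hint, Algebra.PowerBasis.norm_gen_eq_coeff_zero_minpoly,
      adjoin.powerBasis_gen, minpoly_gen, ← RingOfIntegers.minpoly_coe,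
      minpoly.isIntegrallyClosed_eq_field_fractions' ℚ (RingOfIntegers.isIntegral_coe x),
      coeff_map, eq_intCast]
  have : Algebra.norm ℤ x = (-1) ^ (adjoin.powerBasis hint).dim * (minpoly ℤ x).coeff 0 := by
    exact_mod_cast hnorm
  simp [this, Int.natAbs_mul]

theorem prime_of_adjoin_eq_top {K : Type*} [Field K] [NumberField K] {x : 𝓞 K}
    (hx : ℚ⟮(x : K)⟯ = ⊤) (hp : ((minpoly ℤ x).coeff 0).natAbs.Prime) : Prime x := by
  rw [← natAbs_norm_eq_natAbs_coeff_zero_minpoly hx] at hp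
  refine Ideal.prime_of_irreducible_absNorm_span (fun h => ?_)
    (by rwa [Ideal.absNorm_span_singleton])
  simp [h, Nat.not_prime_zero] at hp

end NumberField

namespace Unicritical

/-- For `f = x ^ d + c` one has `f^[k + 1] 0 = c * (orbitPoly d k).eval c`. -/
noncomputable def orbitPoly (d : ℕ) : ℕ → ℤ[X]
  | 0 => 1
  | k + 1 => X ^ (d - 1) * orbitPoly d k ^ d + 1

/-- Evaluated at `c`, this is
`(f^[n + 3] 0 - f^[n + 2] 0) / (c ^ (d - 1) * (f^[n + 2] 0 - f^[n + 1] 0))`,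
so its roots include the parameters `c` of exact type `(n + 2, 1)`. -/
noncomputable def misiurewiczPoly (d n : ℕ) : ℤ[X] :=
  ∑ i ∈ Finset.range d, orbitPoly d (n + 1) ^ i * orbitPoly d n ^ (d - 1 - i)

variable {R : Type*} [CommRing R] {d : ℕ}

theorem orbitPoly_succ (k : ℕ) :
    orbitPoly d (k + 1) = X ^ (d - 1) * orbitPoly d k ^ d + 1 := rfl

theorem orbitPoly_succ_sub (k : ℕ) :
    orbitPoly d (k + 2) - orbitPoly d (k + 1)
      = X ^ (d - 1) * (orbitPoly d (k + 1) ^ d - orbitPoly d k ^ d) := by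
  simp only [orbitPoly_succ]
  ring

theorem orbitPoly_succ_sub_eq_mul_misiurewiczPoly (n : ℕ) :
    orbitPoly d (n + 2) - orbitPoly d (n + 1)
      = X ^ (d - 1) * misiurewiczPoly d n * (orbitPoly d (n + 1) - orbitPoly d n) := by
  rw [orbitPoly_succ_sub, misiurewiczPoly, mul_assoc, geom_sum₂_mul]

theorem isMonicOfDegree_orbitPoly (hd : 2 ≤ d) (k : ℕ) :
    IsMonicOfDegree (orbitPoly d k) (d ^ k - 1) := by
  induction k with
  | zero => simp [orbitPoly]
  | succ k ih =>
    have hdeg : d - 1 + (d ^ k - 1) * d = d ^ (k + 1) - 1 := by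
      have : 1 ≤ d ^ k := Nat.one_le_pow _ _ (by omega)
      have : 1 ≤ d ^ (k + 1) := Nat.one_le_pow _ _ (by omega)
      zify [*, (by omega : 1 ≤ d)]
      ring
    rw [orbitPoly_succ, ← hdeg]
    exact ((isMonicOfDegree_X_pow ℤ _).mul (ih.pow d)).add_right (by rw [natDegree_one]; omega)

theorem orbitPoly_eval_zero (hd : 2 ≤ d) (k : ℕ) : (orbitPoly d k).eval 0 = 1 := by
  cases k with
  | zero => simp [orbitPoly]
  | succ k => simp [orbitPoly_succ, zero_pow (by omega : d - 1 ≠ 0)]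

theorem misiurewiczPoly_monic (hd : 2 ≤ d) (n : ℕ) : (misiurewiczPoly d n).Monic :=
  (isMonicOfDegree_orbitPoly hd (n + 1)).monic_geom_sum₂ (isMonicOfDegree_orbitPoly hd n)
    (Nat.sub_lt_sub_right (Nat.one_le_pow _ _ (by omega))
      (Nat.pow_lt_pow_right (by omega) n.lt_succ_self))
    (by omega : d ≠ 0)

theorem misiurewiczPoly_coeff_zero (hd : 2 ≤ d) (n : ℕ) :
    (misiurewiczPoly d n).coeff 0 = d := by
  simp [coeff_zero_eq_eval_zero, misiurewiczPoly, eval_finsetSum, orbitPoly_eval_zero hd]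

theorem exists_map_orbitPoly_succ_sub_eq_X_pow (hd : d.Prime) (k : ℕ) :
    ∃ j, (orbitPoly d (k + 1) - orbitPoly d k).map (Int.castRingHom (ZMod d)) = X ^ j := by
  have : Fact d.Prime := ⟨hd⟩
  induction k with
  | zero => exact ⟨d - 1, by simp [orbitPoly]⟩
  | succ k ih =>
    obtain ⟨j, hj⟩ := ih
    refine ⟨d - 1 + j * d, ?_⟩
    rw [orbitPoly_succ_sub, Polynomial.map_mul, Polynomial.map_sub]
    simp only [Polynomial.map_pow]
    rw [← sub_pow_char, ← Polynomial.map_sub, hj]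
    simp [pow_add, pow_mul]

theorem map_misiurewiczPoly_zmod (hd : d.Prime) (n : ℕ) :
    (misiurewiczPoly d n).map (Int.castRingHom (ZMod d))
      = X ^ (misiurewiczPoly d n).natDegree := by
  have : Fact d.Prime := ⟨hd⟩
  have hT := misiurewiczPoly_monic hd.two_le n
  obtain ⟨j, hj⟩ := exists_map_orbitPoly_succ_sub_eq_X_pow hd (n + 1)
  rw [← hT.natDegree_map (Int.castRingHom (ZMod d))]
  refine (hT.map _).eq_X_pow_of_dvd_X_pow (n := j)
    ⟨(X ^ (d - 1) * (orbitPoly d (n + 1) - orbitPoly d n)).map (Int.castRingHom (ZMod d)), ?_⟩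
  rw [← hj, orbitPoly_succ_sub_eq_mul_misiurewiczPoly, ← Polynomial.map_mul]
  ring_nf

theorem misiurewiczPoly_irreducible (hd : d.Prime) (n : ℕ) :
    Irreducible (misiurewiczPoly d n) := by
  have : Fact d.Prime := ⟨hd⟩
  have hmap := map_misiurewiczPoly_zmod hd n
  have hcoeff := misiurewiczPoly_coeff_zero hd.two_le n
  refine (misiurewiczPoly_monic hd.two_le n).irreducible_of_map_eq_X_pow
    (Nat.pos_of_ne_zero fun h => ?_) hmap ?_
  · simpa [h, hcoeff] using congrArg (coeff · 0) hmap
  · rw [ZMod.ker_intCastRingHom, Ideal.span_singleton_pow, Ideal.mem_span_singleton, hcoeff]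
    have hp := Nat.prime_iff_prime_int.mp hd
    simpa using (pow_dvd_pow_iff hp.ne_zero hp.not_isUnit (n := 2) (m := 1)).not.mpr (by omega)

theorem iterate_succ_zero_eq_mul_orbitPoly (hd : d ≠ 0) (c : R) (k : ℕ) :
    (fun x => x ^ d + c)^[k + 1] 0 = c * aeval c (orbitPoly d k) := by
  obtain ⟨e, rfl⟩ : ∃ e, d = e + 1 := ⟨d - 1, by omega⟩
  induction k with
  | zero => simp [orbitPoly]
  | succ k ih =>
    rw [Function.iterate_succ_apply', ih, orbitPoly_succ]
    simp only [map_add, map_mul, map_pow, aeval_X, map_one, Nat.add_sub_cancel]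
    ring

theorem aeval_misiurewiczPoly_eq_zero [IsDomain R] (hd : d ≠ 0) {c : R} (hc : c ≠ 0) {n : ℕ}
    (hper : (fun x => x ^ d + c)^[n + 3] 0 = (fun x => x ^ d + c)^[n + 2] 0)
    (hne : (fun x => x ^ d + c)^[n + 2] 0 ≠ (fun x => x ^ d + c)^[n + 1] 0) :
    aeval c (misiurewiczPoly d n) = 0 := by
  simp only [iterate_succ_zero_eq_mul_orbitPoly hd, ne_eq, mul_right_inj' hc] at hper hne
  have h := congrArg (aeval c) (orbitPoly_succ_sub_eq_mul_misiurewiczPoly (d := d) n)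
  simp only [map_sub, map_mul, map_pow, aeval_X, hper, sub_self] at h
  simpa [hc, sub_eq_zero, hne] using h

theorem dvd_iterate_zero (hd : d ≠ 0) (c : R) (k : ℕ) : c ∣ (fun x => x ^ d + c)^[k] 0 := by
  induction k with
  | zero => exact dvd_zero c
  | succ k ih =>
    rw [Function.iterate_succ_apply']
    exact dvd_add (dvd_pow ih hd) dvd_rfl

theorem not_sq_dvd_iterate_zero [IsDomain R] (hd : 2 ≤ d) {c : R} (hc : Prime c)
    {k : ℕ} (hk : 1 ≤ k) : ¬ c ^ 2 ∣ (fun x => x ^ d + c)^[k] 0 := by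
  obtain ⟨k, rfl⟩ := Nat.exists_eq_add_of_le' hk
  have hsq : c ^ 2 ∣ ((fun x => x ^ d + c)^[k] 0) ^ d :=
    (pow_dvd_pow c hd).trans (pow_dvd_pow_of_dvd (dvd_iterate_zero (by omega) c k) d)
  rw [Function.iterate_succ_apply', dvd_add_right hsq]
  simpa using (pow_dvd_pow_iff hc.ne_zero hc.not_isUnit (n := 2) (m := 1)).not.mpr (by omega)

theorem isMonicOfDegree_iterate_comp [Nontrivial R] (hd : d ≠ 0) (c : R) (k : ℕ) :
    IsMonicOfDegree ((X ^ d + C c).comp^[k] X) (d ^ k) := by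
  have hf : IsMonicOfDegree (X ^ d + C c) d :=
    (isMonicOfDegree_X_pow R d).add_right (by rw [natDegree_C]; omega)
  induction k with
  | zero => simpa using isMonicOfDegree_X R
  | succ k ih =>
    rw [Function.iterate_succ_apply', pow_succ']
    exact hf.comp (pow_ne_zero k hd) ih

theorem irreducible_iterate_comp [IsDomain R] (hd : 2 ≤ d) {c : R} (hc : Prime c)
    {k : ℕ} (hk : 1 ≤ k) : Irreducible ((X ^ d + C c).comp^[k] X) := by
  have : (Ideal.span {c}).IsPrime := (Ideal.span_singleton_prime hc.ne_zero).mpr hc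
  have hF := isMonicOfDegree_iterate_comp (by omega : d ≠ 0) c k
  refine hF.monic.irreducible_of_map_eq_X_pow (φ := Ideal.Quotient.mk (Ideal.span {c}))
    (by rw [hF.natDegree_eq]; positivity) ?_ ?_
  · rw [map_iterate_comp, hF.natDegree_eq]
    simp [Ideal.Quotient.eq_zero_iff_mem.mpr (Ideal.mem_span_singleton_self c),
      iterate_X_pow_comp_X]
  · rw [Ideal.mk_ker, Ideal.span_singleton_pow, Ideal.mem_span_singleton,
      coeff_zero_eq_eval_zero, iterate_comp_eval]
    simpa using not_sq_dvd_iterate_zero hd hc hk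

theorem irreducible_iterate_comp_algebraMap [IsDomain R] [IsIntegrallyClosed R]
    {K : Type*} [Field K] [Algebra R K] [IsFractionRing R K] (hd : 2 ≤ d) {c : R}
    (hc : Prime c) {k : ℕ} (hk : 1 ≤ k) :
    Irreducible ((X ^ d + C (algebraMap R K c)).comp^[k] X) := by
  have hF := isMonicOfDegree_iterate_comp (by omega : d ≠ 0) c k
  have := (hF.monic.irreducible_iff_irreducible_map_fraction_map (K := K)).mp
    (irreducible_iterate_comp hd hc hk)
  simpa [map_iterate_comp] using this

end Unicritical

open Unicritical

/-- Let `d` be a prime and suppose `f(x) = x^d + c` has exact type `(m,1)`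
with `m ≥ 1` (a fixed point in the post-critical orbit). Set `K = ℚ(c)`. Then `f` is
stable over `K`: every iterate `f^N` is irreducible in `K[X]`. -/
theorem stable_of_exact_type_m_one {K : Type*} [Field K] [NumberField K]
    (d m : ℕ) (hd : d.Prime) (hm : 1 ≤ m)
    (c : K)
    (hK : IntermediateField.adjoin ℚ {c} = ⊤)
    (f : K → K) (hf : f = fun x => x ^ d + c)
    (hper : f^[m + 1] 0 = f^[m] 0)
    (htail : ∀ k, k < m → f^[k + 1] 0 ≠ f^[k] 0)
    (N : ℕ) (hN : 1 ≤ N) :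
    Irreducible ((fun p => (X ^ d + C c).comp p)^[N] (X : K[X])) := by
  subst hf
  have hc : c ≠ 0 := by simpa [hd.ne_zero] using htail 0 hm
  obtain ⟨n, rfl⟩ : ∃ n, m = n + 2 := by
    refine ⟨m - 2, (Nat.sub_add_cancel ?_).symm⟩
    rcases hm.eq_or_lt with rfl | h
    · simp [hd.ne_zero, hc] at hper
    · omega
  have hroot := aeval_misiurewiczPoly_eq_zero hd.ne_zero hc hper (htail (n + 1) (by omega))
  let x : 𝓞 K := ⟨c, misiurewiczPoly d n, misiurewiczPoly_monic hd.two_le n,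
    by rwa [← aeval_def]⟩
  have hmin : minpoly ℤ x = misiurewiczPoly d n := by
    rw [← RingOfIntegers.minpoly_coe]
    exact eq_of_monic_of_associated (minpoly.monic x.2) (misiurewiczPoly_monic hd.two_le n)
      ((minpoly.irreducible x.2).associated_of_dvd (misiurewiczPoly_irreducible hd n)
        (minpoly.isIntegrallyClosed_dvd x.2 hroot))
  have hx : Prime x := prime_of_adjoin_eq_top hK
    (by rwa [hmin, misiurewiczPoly_coeff_zero hd.two_le, Int.natAbs_natCast])
  exact irreducible_iterate_comp_algebraMap hd.two_le hx hN
end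

section
/- Let d be a prime and m ≥ 1. The polynomial G_d(m,1) ∈ ℤ[x], whose roots are exactly the Misiurewicz parameters c with exact type (m,1) for x^d + c, is irreducible over ℚ. Equivalently, if c is a root of G_d(m,1) then [ℚ(c):ℚ] = (d^{m−1}−1)(d−1) = deg G_d(m,1). -/
/-!
Write `f_c^[k+1](0) = c · v_k(c)` with `v_0 = 1`, `v_{k+1} = 1 + X^(d-1) v_k^d`. For `m = t + 2`,
the condition `f_c^[m+1](0) = f_c^[m](0) ≠ f_c^[m-1](0)` says `v_{t+1}(c)^d = v_t(c)^d` but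
`v_{t+1}(c) ≠ v_t(c)`, so `c` is a root of the monic `G = (v_{t+1}^d - v_t^d) / (v_{t+1} - v_t)`
of degree `(d^(t+1) - 1)(d - 1)`. Modulo `d` the Frobenius turns the recursion into
`v_{k+1} - v_k ≡ X^(d^(k+1) - 1)`, hence `G ≡ X^(deg G)`, while `v_k(0) = 1` gives `G(0) = d`.
So `G` is Eisenstein at `d`, hence the minimal polynomial of `c`. (`m = 1` would force `c = 0`.)
-/

open NumberField Polynomial

namespace Polynomial

variable {R : Type*} [CommRing R] {p q : R[X]}

theorem Monic.natDegree_pow_lt_natDegree_pow (hp : p.Monic) (hq : q.natDegree < p.natDegree)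
    {n : ℕ} (hn : n ≠ 0) : (q ^ n).natDegree < (p ^ n).natDegree :=
  calc (q ^ n).natDegree ≤ n * q.natDegree := natDegree_pow_le
    _ < n * p.natDegree := Nat.mul_lt_mul_of_pos_left hq (Nat.pos_of_ne_zero hn)
    _ = (p ^ n).natDegree := (hp.natDegree_pow n).symm

theorem Monic.geom_sum₂ (hp : p.Monic) (hq : q.natDegree < p.natDegree) {n : ℕ} (hn : n ≠ 0) :
    (∑ i ∈ Finset.range n, p ^ i * q ^ (n - 1 - i)).Monic := by
  rw [Monic, ← leadingCoeff_mul_monic (hp.sub_of_left (degree_lt_degree hq)), geom_sum₂_mul]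
  exact (hp.pow n).sub_of_left (degree_lt_degree (hp.natDegree_pow_lt_natDegree_pow hq hn))

theorem Monic.natDegree_geom_sum₂ (hp : p.Monic) (hq : q.natDegree < p.natDegree) {n : ℕ}
    (hn : n ≠ 0) :
    (∑ i ∈ Finset.range n, p ^ i * q ^ (n - 1 - i)).natDegree = (n - 1) * p.natDegree := by
  nontriviality R
  have h := congrArg natDegree (geom_sum₂_mul p q n)
  rw [(hp.geom_sum₂ hq hn).natDegree_mul (hp.sub_of_left (degree_lt_degree hq)),
    natDegree_sub_eq_left_of_natDegree_lt hq,
    natDegree_sub_eq_left_of_natDegree_lt (hp.natDegree_pow_lt_natDegree_pow hq hn),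
    hp.natDegree_pow] at h
  rw [Nat.sub_one_mul]
  omega

end Polynomial

theorem Polynomial.Monic.irreducible_of_map_eq_X_pow_s10 {p : ℕ} [hp : Fact p.Prime] {f : ℤ[X]}
    (hf : f.Monic) (hdeg : 0 < f.natDegree)
    (hmap : f.map (Int.castRingHom (ZMod p)) = X ^ f.natDegree)
    (hcoeff : ¬ (p : ℤ) ^ 2 ∣ f.coeff 0) : Irreducible f := by
  have hprime : (Ideal.span {(p : ℤ)}).IsPrime :=
    (Ideal.span_singleton_prime (mod_cast hp.out.ne_zero)).2 (Nat.prime_iff_prime_int.1 hp.out)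
  refine (hf.isEisensteinAt_of_mem_of_notMem hprime.ne_top (fun {n} hn => ?_) ?_).irreducible
    hprime hf.isPrimitive hdeg
  · have := congrArg (coeff · n) hmap
    simp only [coeff_map, coeff_X_pow, hn.ne, if_false] at this
    rwa [Ideal.mem_span_singleton, ← ZMod.intCast_zmod_eq_zero_iff_dvd]
  · rwa [Ideal.span_singleton_pow, Ideal.mem_span_singleton]

theorem finrank_eq_natDegree_of_adjoin_eq_top {F K : Type*} [Field F] [Field K] [Algebra F K]
    {α : K} (hK : IntermediateField.adjoin F {α} = ⊤) {g : F[X]} (hirr : Irreducible g)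
    (hmonic : g.Monic) (hα : aeval α g = 0) : Module.finrank F K = g.natDegree := by
  have hint : IsIntegral F α := ⟨g, hmonic, hα⟩
  rw [← IntermediateField.finrank_top', ← hK, IntermediateField.adjoin.finrank hint,
    ← minpoly.eq_of_irreducible_of_monic hirr hα hmonic]

noncomputable def critOrbitPoly (d : ℕ) : ℕ → ℤ[X]
  | 0 => 1
  | k + 1 => 1 + X ^ (d - 1) * critOrbitPoly d k ^ d

section CritOrbitPoly

variable {d : ℕ}

theorem aeval_critOrbitPoly_succ {R : Type*} [CommRing R] (c : R) (k : ℕ) :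
    aeval c (critOrbitPoly d (k + 1)) = 1 + c ^ (d - 1) * aeval c (critOrbitPoly d k) ^ d := by
  simp [critOrbitPoly]

theorem iterate_succ_zero_eq_mul_aeval_critOrbitPoly {R : Type*} [CommRing R] (hd : d ≠ 0)
    (c : R) (k : ℕ) :
    (fun x => x ^ d + c)^[k + 1] 0 = c * aeval c (critOrbitPoly d k) := by
  induction k with
  | zero => simp [critOrbitPoly, hd]
  | succ k ih =>
    rw [Function.iterate_succ_apply', ih, aeval_critOrbitPoly_succ]
    obtain ⟨e, rfl⟩ := Nat.exists_eq_add_one_of_ne_zero hd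
    rw [Nat.add_sub_cancel]
    ring

theorem critOrbitPoly_monic (hd : 1 < d) (k : ℕ) : (critOrbitPoly d k).Monic := by
  induction k with
  | zero => exact monic_one
  | succ k ih =>
    have htop : (X ^ (d - 1) * critOrbitPoly d k ^ d).Monic := (monic_X_pow _).mul (ih.pow d)
    refine htop.add_of_right (degree_lt_degree ?_)
    rw [natDegree_one, (monic_X_pow _).natDegree_mul (ih.pow d), natDegree_X_pow]
    omega

theorem natDegree_critOrbitPoly (hd : 1 < d) (k : ℕ) :
    (critOrbitPoly d k).natDegree = d ^ k - 1 := by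
  induction k with
  | zero => simp [critOrbitPoly]
  | succ k ih =>
    have hmonic := critOrbitPoly_monic hd k
    have hle : d ≤ d ^ (k + 1) := Nat.le_self_pow k.succ_ne_zero d
    have htop : (X ^ (d - 1) * critOrbitPoly d k ^ d).natDegree = d ^ (k + 1) - 1 := by
      rw [(monic_X_pow _).natDegree_mul (hmonic.pow d), natDegree_X_pow, hmonic.natDegree_pow, ih,
        Nat.mul_sub_one, ← pow_succ']
      omega
    refine (natDegree_add_eq_right_of_degree_lt (degree_lt_degree ?_)).trans htop
    rw [natDegree_one, htop]
    omega

theorem critOrbitPoly_eval_zero (hd : 1 < d) (k : ℕ) : (critOrbitPoly d k).eval 0 = 1 := by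
  cases k <;> simp [critOrbitPoly, zero_pow (Nat.sub_ne_zero_of_lt hd)]

theorem map_critOrbitPoly_succ_sub [hp : Fact d.Prime] (k : ℕ) :
    (critOrbitPoly d (k + 1)).map (Int.castRingHom (ZMod d)) -
      (critOrbitPoly d k).map (Int.castRingHom (ZMod d)) = X ^ (d ^ (k + 1) - 1) := by
  induction k with
  | zero => simp [critOrbitPoly]
  | succ k ih =>
    calc (critOrbitPoly d (k + 1 + 1)).map (Int.castRingHom (ZMod d)) -
          (critOrbitPoly d (k + 1)).map (Int.castRingHom (ZMod d))
        = X ^ (d - 1) * ((critOrbitPoly d (k + 1)).map (Int.castRingHom (ZMod d)) -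
            (critOrbitPoly d k).map (Int.castRingHom (ZMod d))) ^ d := by
          rw [sub_pow_char, critOrbitPoly, critOrbitPoly]
          simp only [Polynomial.map_add, Polynomial.map_one, Polynomial.map_mul,
            Polynomial.map_pow, Polynomial.map_X]
          ring
      _ = X ^ (d ^ (k + 1 + 1) - 1) := by
          rw [ih, ← pow_mul, ← pow_add]
          congr 1
          have hd := hp.out.one_lt
          have hle : d ≤ d ^ (k + 1 + 1) := Nat.le_self_pow (by omega) d
          rw [Nat.sub_one_mul, ← pow_succ]
          omega

end CritOrbitPoly

-- The paper's `G_d(t + 2, 1)`.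
noncomputable def misiurewiczPoly (d t : ℕ) : ℤ[X] :=
  ∑ i ∈ Finset.range d, critOrbitPoly d (t + 1) ^ i * critOrbitPoly d t ^ (d - 1 - i)

section MisiurewiczPoly

variable {d : ℕ}

theorem misiurewiczPoly_mul_sub (t : ℕ) :
    misiurewiczPoly d t * (critOrbitPoly d (t + 1) - critOrbitPoly d t) =
      critOrbitPoly d (t + 1) ^ d - critOrbitPoly d t ^ d :=
  geom_sum₂_mul _ _ d

theorem natDegree_critOrbitPoly_lt_succ (hd : 1 < d) (t : ℕ) :
    (critOrbitPoly d t).natDegree < (critOrbitPoly d (t + 1)).natDegree := by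
  rw [natDegree_critOrbitPoly hd, natDegree_critOrbitPoly hd]
  have := Nat.pow_lt_pow_succ hd (n := t)
  have := Nat.one_le_pow t d (by omega)
  omega

theorem misiurewiczPoly_monic (hd : 1 < d) (t : ℕ) : (misiurewiczPoly d t).Monic :=
  (critOrbitPoly_monic hd (t + 1)).geom_sum₂ (natDegree_critOrbitPoly_lt_succ hd t) (by omega)

theorem natDegree_misiurewiczPoly (hd : 1 < d) (t : ℕ) :
    (misiurewiczPoly d t).natDegree = (d ^ (t + 1) - 1) * (d - 1) := by
  rw [misiurewiczPoly, (critOrbitPoly_monic hd (t + 1)).natDegree_geom_sum₂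
    (natDegree_critOrbitPoly_lt_succ hd t) (by omega), natDegree_critOrbitPoly hd, mul_comm]

theorem misiurewiczPoly_coeff_zero (hd : 1 < d) (t : ℕ) : (misiurewiczPoly d t).coeff 0 = d := by
  simp [misiurewiczPoly, coeff_zero_eq_eval_zero, eval_finsetSum, critOrbitPoly_eval_zero hd]

theorem map_misiurewiczPoly [hp : Fact d.Prime] (t : ℕ) :
    (misiurewiczPoly d t).map (Int.castRingHom (ZMod d)) =
      X ^ (misiurewiczPoly d t).natDegree := by
  have hd := hp.out.one_lt
  have h := congrArg (map (Int.castRingHom (ZMod d))) (misiurewiczPoly_mul_sub (d := d) t)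
  rw [Polynomial.map_mul, Polynomial.map_sub, map_critOrbitPoly_succ_sub, Polynomial.map_sub,
    Polynomial.map_pow, Polynomial.map_pow, ← sub_pow_char, map_critOrbitPoly_succ_sub,
    ← pow_mul] at h
  rw [natDegree_misiurewiczPoly hd]
  refine mul_right_cancel₀ (pow_ne_zero (d ^ (t + 1) - 1) X_ne_zero) (h.trans ?_)
  have hle : d ^ (t + 1) - 1 ≤ (d ^ (t + 1) - 1) * d := Nat.le_mul_of_pos_right _ (by omega)
  rw [← pow_add, Nat.mul_sub_one]
  congr 1
  omega

theorem irreducible_map_misiurewiczPoly (hd : d.Prime) (t : ℕ) :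
    Irreducible ((misiurewiczPoly d t).map (algebraMap ℤ ℚ)) := by
  have : Fact d.Prime := ⟨hd⟩
  have hmonic := misiurewiczPoly_monic hd.one_lt t
  refine hmonic.isPrimitive.irreducible_iff_irreducible_map_fraction_map.1
    (hmonic.irreducible_of_map_eq_X_pow_s10 ?_ (map_misiurewiczPoly t) ?_)
  · rw [natDegree_misiurewiczPoly hd.one_lt]
    have := Nat.one_lt_pow (n := t + 1) (by omega) hd.one_lt
    have := hd.one_lt
    exact Nat.mul_pos (by omega) (by omega)
  · rw [misiurewiczPoly_coeff_zero hd.one_lt, ← Int.natCast_pow, Int.natCast_dvd_natCast]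
    exact fun h => (Nat.pow_lt_pow_right hd.one_lt one_lt_two).not_ge
      (by simpa using Nat.le_of_dvd hd.pos h)

end MisiurewiczPoly

theorem aeval_misiurewiczPoly_eq_zero {R : Type*} [CommRing R] [IsDomain R] {d t : ℕ}
    (hd : d ≠ 0) {c : R} (hc : c ≠ 0)
    (hper : (fun x => x ^ d + c)^[t + 3] 0 = (fun x => x ^ d + c)^[t + 2] 0)
    (hne : (fun x => x ^ d + c)^[t + 2] 0 ≠ (fun x => x ^ d + c)^[t + 1] 0) :
    aeval c (misiurewiczPoly d t) = 0 := by
  simp only [iterate_succ_zero_eq_mul_aeval_critOrbitPoly hd] at hper hne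
  have hfactor := congrArg (aeval c) (misiurewiczPoly_mul_sub (d := d) t)
  simp only [map_mul, map_sub, map_pow] at hfactor
  have hpow := (aeval_critOrbitPoly_succ c (t + 1)).symm.trans
    ((mul_left_cancel₀ hc hper).trans (aeval_critOrbitPoly_succ c t))
  rw [mul_left_cancel₀ (pow_ne_zero _ hc) (add_left_cancel hpow), sub_self] at hfactor
  exact (mul_eq_zero.1 hfactor).resolve_right (sub_ne_zero.2 fun h => hne (by rw [h]))

/-- Let `d` be a prime and `m ≥ 1`. The polynomial `G_d(m,1)`, whose
roots are exactly the Misiurewicz parameters `c` of exact type `(m,1)` for `x^d + c`,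
is irreducible over `ℚ`. Equivalently (as formalized here): if `c` is such a
parameter, then `[ℚ(c) : ℚ] = (d^(m−1) − 1)(d − 1) = deg G_d(m,1)`. -/
theorem degree_of_misiurewicz_param_period_one {K : Type*} [Field K] [NumberField K]
    (d m : ℕ) (hd : d.Prime) (hm : 1 ≤ m)
    (c : 𝓞 K)
    (hK : IntermediateField.adjoin ℚ {algebraMap (𝓞 K) K c} = ⊤)
    (f : 𝓞 K → 𝓞 K) (hf : f = fun x => x ^ d + c)
    (hper : f^[m + 1] 0 = f^[m] 0)
    (htail : ∀ k, k < m → f^[k + 1] 0 ≠ f^[k] 0) :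
    Module.finrank ℚ K = (d ^ (m - 1) - 1) * (d - 1) := by
  subst hf
  have hc : c ≠ 0 := by simpa [hd.ne_zero] using htail 0 hm
  obtain ⟨t, rfl⟩ : ∃ t, m = t + 2 := by
    have hm1 : m ≠ 1 := by
      rintro rfl
      simp [hd.ne_zero, hc] at hper
    exact ⟨m - 2, by omega⟩
  have hroot := aeval_misiurewiczPoly_eq_zero hd.ne_zero hc hper (htail (t + 1) (by omega))
  have hmonic := misiurewiczPoly_monic hd.one_lt t
  rw [finrank_eq_natDegree_of_adjoin_eq_top hK (irreducible_map_misiurewiczPoly hd t)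
    (hmonic.map _) (by rw [aeval_map_algebraMap, aeval_algebraMap_apply, hroot, map_zero]),
    hmonic.natDegree_map, natDegree_misiurewiczPoly hd.one_lt]
  rfl
end

section
/- Let f(x) = x^d + c be post-critically finite with exact type (0,n) (i.e., 0 is periodic of exact period n), K = ℚ(c), a_i = f^i(0), so a_n = 0. Then a_i is a unit in O_K for all 1 ≤ i ≤ n−1. -/
/-!
Since `x - y ∣ f x - f y` for the polynomial map `f`, the differences `f^[m] x - f^[m] y` of
two points of one `n`-cycle divide each other along the cycle, so
`f x - f y ∣ f^[n] x - f^[n] y = x - y`.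
For `y = 0` and `x = a_i` this reads `a_i ^ d ∣ a_i`, and `a_i ≠ 0` forces `a_i ^ (d - 1) ∣ 1`.
-/

open NumberField Function

namespace Function

variable {R : Type*} [CommRing R] {f : R → R}

theorem iterate_sub_dvd_iterate_sub (hf : ∀ x y, x - y ∣ f x - f y) (x y : R) {k m : ℕ}
    (hkm : k ≤ m) : f^[k] x - f^[k] y ∣ f^[m] x - f^[m] y := by
  induction m, hkm using Nat.le_induction with
  | base => rfl
  | succ m _ ih =>
    rw [iterate_succ_apply', iterate_succ_apply']
    exact ih.trans (hf _ _)

theorem IsPeriodicPt.apply_sub_apply_dvd_sub (hf : ∀ x y, x - y ∣ f x - f y) {n : ℕ} {x y : R}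
    (hx : IsPeriodicPt f n x) (hy : IsPeriodicPt f n y) (hn : n ≠ 0) : f x - f y ∣ x - y := by
  simpa only [iterate_one, hx.eq, hy.eq] using
    iterate_sub_dvd_iterate_sub hf x y (Nat.one_le_iff_ne_zero.mpr hn)

end Function

theorem sub_dvd_pow_add_sub_pow_add {R : Type*} [CommRing R] (d : ℕ) (c x y : R) :
    x - y ∣ (x ^ d + c) - (y ^ d + c) := by
  rw [add_sub_add_right_eq_sub]
  exact sub_dvd_pow_sub_pow x y d

theorem isUnit_of_pow_dvd_self {M : Type*} [CommMonoidWithZero M] [IsCancelMulZero M]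
    {x : M} {d : ℕ} (hx : x ≠ 0) (hd : 2 ≤ d) (h : x ^ d ∣ x) : IsUnit x := by
  obtain ⟨e, rfl⟩ := Nat.exists_eq_add_of_le' hd
  have hdvd_one : x ^ (e + 1) ∣ 1 := by
    rwa [← mul_dvd_mul_iff_left hx, mul_one, ← pow_succ']
  exact isUnit_of_dvd_one ((dvd_pow_self x e.succ_ne_zero).trans hdvd_one)

theorem orbit_elem_isUnit_of_periodic_case_general {K : Type*} [Field K] [NumberField K]
    (d n : ℕ) (hd : 2 ≤ d)
    (c : 𝓞 K)
    (f : 𝓞 K → 𝓞 K) (hf : f = fun x => x ^ d + c)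
    (a : ℕ → 𝓞 K) (ha : ∀ i, a i = f^[i] 0)
    (hper : f^[n] 0 = 0)
    (hmin : ∀ i, 1 ≤ i → i ≤ n - 1 → f^[i] 0 ≠ 0)
    (i : ℕ) (hi : 1 ≤ i) (hin : i ≤ n - 1) :
    IsUnit (a i) := by
  have h0 : IsPeriodicPt f n 0 := hper
  have hai : IsPeriodicPt f n (a i) := ha i ▸ h0.apply_iterate i
  have hdvd : a i ^ d ∣ a i := by
    have := hai.apply_sub_apply_dvd_sub (hf ▸ sub_dvd_pow_add_sub_pow_add d c) h0 (by omega)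
    simpa [hf, zero_pow (by omega : d ≠ 0)] using this
  exact isUnit_of_pow_dvd_self (ha i ▸ hmin i hi hin) hd hdvd

/-- Let `f(x) = x^d + c` be post-critically finite with exact type
`(0,n)` (i.e. `0` is periodic of exact period `n`), `K = ℚ(c)`, `a_i = f^i(0)`, so
`a_n = 0`. Then `a_i` is a unit in `𝓞 K` for all `1 ≤ i ≤ n−1`. -/
theorem orbit_elem_isUnit_of_periodic_case {K : Type*} [Field K] [NumberField K]
    (d n : ℕ) (hd : 2 ≤ d) (hn : 1 ≤ n)
    (c : 𝓞 K)
    (hK : IntermediateField.adjoin ℚ {algebraMap (𝓞 K) K c} = ⊤)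
    (f : 𝓞 K → 𝓞 K) (hf : f = fun x => x ^ d + c)
    (a : ℕ → 𝓞 K) (ha : ∀ i, a i = f^[i] 0)
    (hper : f^[n] 0 = 0)
    (hmin : ∀ i, 1 ≤ i → i ≤ n - 1 → f^[i] 0 ≠ 0)
    (i : ℕ) (hi : 1 ≤ i) (hin : i ≤ n - 1) :
    IsUnit (a i) :=
  orbit_elem_isUnit_of_periodic_case_general d n hd c f hf a ha hper hmin i hi hin
end

section
/- Let x_1, …, x_n be distinct elements of an integral domain with x_{i+1} = x_i^d + c for all i (indices mod n, d ≥ 2, c fixed). Then ∏_{i≠j} (x_i^d − x_j^d)/(x_i − x_j) = 1; in particular each quotient (x_i^d − x_j^d)/(x_i − x_j) is a unit in the ring generated by the x_i and c. -/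
/-!
Write `V = ∏_{i ≠ j} (x_i - x_j)`, which is nonzero because the `x_i` are distinct.
The map `x ↦ x^d + c` permutes the cycle `x_1, …, x_n` cyclically, so it leaves `V` unchanged;
on the other hand it multiplies each factor `x_i - x_j` by the quotient `Q_{ij}`.
Hence `(∏_{i ≠ j} Q_{ij}) V = V`, and cancelling `V` in the domain gives `∏_{i ≠ j} Q_{ij} = 1`.
-/

open Finset Function

section OffDiagonal

variable {ι M : Type*} [Fintype ι] [DecidableEq ι] [CommMonoid M]

def offDiagProd (g : ι → ι → M) : M :=
  ∏ i, ∏ j, if i = j then 1 else g i j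

theorem offDiagProd_comp_perm (σ : Equiv.Perm ι) (g : ι → ι → M) :
    offDiagProd (fun i j => g (σ i) (σ j)) = offDiagProd g :=
  calc offDiagProd (fun i j => g (σ i) (σ j))
      = ∏ i, ∏ j, (if σ i = σ j then 1 else g (σ i) (σ j)) := by
        simp only [offDiagProd, σ.injective.eq_iff]
    _ = ∏ i, ∏ j, (if σ i = j then 1 else g (σ i) j) :=
        Fintype.prod_congr _ _ fun i => Equiv.prod_comp σ fun j => if σ i = j then 1 else g (σ i) j
    _ = offDiagProd g := Equiv.prod_comp σ fun i => ∏ j, if i = j then 1 else g i j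

theorem offDiagProd_mul (g h : ι → ι → M) :
    offDiagProd (fun i j => g i j * h i j) = offDiagProd g * offDiagProd h := by
  simp only [offDiagProd, ← prod_mul_distrib]
  refine Fintype.prod_congr _ _ fun i => Fintype.prod_congr _ _ fun j => ?_
  split_ifs
  exacts [(one_mul 1).symm, rfl]

theorem Submonoid.exists_mul_eq_one_of_prod_eq_one {κ : Type*} [DecidableEq κ] (S : Submonoid M)
    {s : Finset κ} {f : κ → M} (h : ∏ k ∈ s, f k = 1) (hS : ∀ k ∈ s, f k ∈ S) {a : κ}
    (ha : a ∈ s) : ∃ u ∈ S, f a * u = 1 :=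
  ⟨_, S.prod_mem fun k hk => hS k (mem_of_mem_erase hk), (mul_prod_erase s f ha).trans h⟩

theorem Submonoid.exists_mul_eq_one_of_offDiagProd_eq_one (S : Submonoid M) {g : ι → ι → M}
    (h : offDiagProd g = 1) (hS : ∀ i j, i ≠ j → g i j ∈ S) {i j : ι} (hij : i ≠ j) :
    ∃ u ∈ S, g i j * u = 1 := by
  rw [offDiagProd, ← Fintype.prod_prod_type'] at h
  simpa [hij] using S.exists_mul_eq_one_of_prod_eq_one h
    (fun p _ => by split_ifs with hp; exacts [S.one_mem, hS _ _ hp]) (mem_univ (i, j))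

end OffDiagonal

theorem prod_range_prod_range_ite_eq_offDiagProd {M : Type*} [CommMonoid M] (n : ℕ)
    (g : ℕ → ℕ → M) :
    ∏ i ∈ range n, ∏ j ∈ range n, (if i = j then 1 else g i j) =
      offDiagProd (fun i j : Fin n => g i j) := by
  simp only [offDiagProd, prod_range, Fin.val_inj]

section Domain

variable {ι R : Type*} [Fintype ι] [DecidableEq ι] [CommRing R] [IsDomain R]

theorem offDiagProd_sub_ne_zero {x : ι → R} (hx : Injective x) :
    offDiagProd (fun i j => x i - x j) ≠ 0 :=
  prod_ne_zero_iff.2 fun i _ => prod_ne_zero_iff.2 fun j _ => by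
    split_ifs with h
    exacts [one_ne_zero, sub_ne_zero.2 (hx.ne h)]

theorem offDiagProd_eq_one_of_sub_comp_perm (σ : Equiv.Perm ι) {x : ι → R} (hx : Injective x)
    {Q : ι → ι → R} (hQ : ∀ i j, x (σ i) - x (σ j) = Q i j * (x i - x j)) :
    offDiagProd Q = 1 := by
  refine mul_right_cancel₀ (offDiagProd_sub_ne_zero hx) ?_
  rw [one_mul, ← offDiagProd_mul]
  simp only [← hQ]
  exact offDiagProd_comp_perm σ fun i j => x i - x j

end Domain

theorem val_finRotate {n : ℕ} (i : Fin n) : (finRotate n i : ℕ) = (i + 1) % n := by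
  cases n with
  | zero => exact i.elim0
  | succ n => rw [finRotate_apply, Fin.val_add, Fin.val_one', Nat.add_mod_mod]

theorem prod_cyclic_orbit_quotients_eq_one_general {R : Type*} [CommRing R] [IsDomain R]
    (d n : ℕ)
    (c : R) (x : ℕ → R)
    (hdist : ∀ i j, i < n → j < n → x i = x j → i = j)
    (hrec : ∀ i, i < n → x ((i + 1) % n) = x i ^ d + c) :
    (∏ i ∈ Finset.range n, ∏ j ∈ Finset.range n,
        if i = j then 1 else ∑ l ∈ Finset.range d, x i ^ l * x j ^ (d - 1 - l)) = 1 ∧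
    ∀ i j, i < n → j < n → i ≠ j →
      ∃ u ∈ Subring.closure ({c} ∪ Set.range fun i : Fin n => x i),
        (∑ l ∈ Finset.range d, x i ^ l * x j ^ (d - 1 - l)) * u = 1 := by
  set Q : ℕ → ℕ → R := fun i j => ∑ l ∈ range d, x i ^ l * x j ^ (d - 1 - l)
  have hy : Injective fun i : Fin n => x i := fun i j h => Fin.ext (hdist i j i.2 j.2 h)
  have hQ : ∀ i j : Fin n, x (finRotate n i) - x (finRotate n j) = Q i j * (x i - x j) := by
    intro i j
    rw [val_finRotate, val_finRotate, hrec i i.2, hrec j j.2, geom_sum₂_mul]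
    ring
  have hprod : offDiagProd (fun i j : Fin n => Q i j) = 1 :=
    offDiagProd_eq_one_of_sub_comp_perm (finRotate n) hy hQ
  refine ⟨(prod_range_prod_range_ite_eq_offDiagProd n Q).trans hprod, fun i j hi hj hij => ?_⟩
  set S := Subring.closure ({c} ∪ Set.range fun i : Fin n => x i)
  have hxS : ∀ k : Fin n, x k ∈ S := fun k => Subring.subset_closure (Or.inr ⟨k, rfl⟩)
  have hQS : ∀ k l : Fin n, Q k l ∈ S := fun k l =>
    S.sum_mem fun m _ => S.mul_mem (S.pow_mem (hxS k) _) (S.pow_mem (hxS l) _)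
  exact S.toSubmonoid.exists_mul_eq_one_of_offDiagProd_eq_one hprod (fun k l _ => hQS k l)
    (i := ⟨i, hi⟩) (j := ⟨j, hj⟩) (by simpa using hij)

/-- Let `x_1, …, x_n` be distinct elements of an integral domain with
`x_{i+1} = x_i^d + c` (indices mod `n`, `d ≥ 2`, `c` fixed). Then
`∏_{i≠j} (x_i^d − x_j^d)/(x_i − x_j) = 1`, where each quotient is
`Σ_{l=0}^{d−1} x_i^l x_j^{d−1−l}`; in particular each quotient is a unit in the
subring generated by the `x_i` and `c`. -/
theorem prod_cyclic_orbit_quotients_eq_one {R : Type*} [CommRing R] [IsDomain R]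
    (d n : ℕ) (hd : 2 ≤ d) (hn : 1 ≤ n)
    (c : R) (x : ℕ → R)
    (hdist : ∀ i j, i < n → j < n → x i = x j → i = j)
    (hrec : ∀ i, i < n → x ((i + 1) % n) = x i ^ d + c) :
    (∏ i ∈ Finset.range n, ∏ j ∈ Finset.range n,
        if i = j then 1 else ∑ l ∈ Finset.range d, x i ^ l * x j ^ (d - 1 - l)) = 1 ∧
    ∀ i j, i < n → j < n → i ≠ j →
      ∃ u ∈ Subring.closure ({c} ∪ Set.range fun i : Fin n => x i),
        (∑ l ∈ Finset.range d, x i ^ l * x j ^ (d - 1 - l)) * u = 1 :=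
  prod_cyclic_orbit_quotients_eq_one_general d n c x hdist hrec
end

section
/- Let d be a prime, f(x) = x^d + c with exact type (m,n), m ≥ 1, and suppose n | i with a_i periodic (m ≤ i ≤ m+n−1). Then there exists α ∈ O_K such that a_i^{d^{m−1}(d−1)} = d·(−a_{m−1}^{d−1} + α·a_i^d), where a_j = f^j(0) and K = ℚ(c). -/
/-! The orbit `a j = f^[j] 0` of `f x = x ^ d + c` satisfies `a (i + j) - a j ≡ a i ^ d ^ j` modulo
`d * a i ^ d` for `j ≥ 1`: the case `j = 1` is exact, and it propagates because
`(b + e) ^ d ≡ b ^ d + e ^ d` modulo `d * b * e`. For `j = m - 1` the difference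
`e = a (i + j) - a j` is nonzero while `(a j + e) ^ d = a j ^ d` by periodicity, so cancelling `e`
from the binomial expansion gives `e ^ (d - 1) ≡ -d * a j ^ (d - 1)` modulo `d * e`; since
`a i ^ d ∣ e`, this becomes the identity. -/

open NumberField Function

lemma exists_add_pow_prime_eq_add_mul_sq {R : Type*} [CommRing R] {p : ℕ} (hp : p.Prime)
    (x y : R) : ∃ r, (x + y) ^ p = x ^ p + y ^ p + p * x * y ^ (p - 1) + p * x ^ 2 * r := by
  have h1 : 1 ∈ Finset.Ioo 0 p := Finset.mem_Ioo.2 ⟨one_pos, hp.one_lt⟩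
  have hsq : x ^ 2 ∣ ∑ k ∈ Finset.Ioo 0 p \ {1}, x ^ k * y ^ (p - k) * (p.choose k / p : ℕ) := by
    refine Finset.dvd_sum fun k hk => ?_
    obtain ⟨⟨hk0, -⟩, hk1⟩ : (0 < k ∧ k < p) ∧ k ≠ 1 := by simpa using hk
    exact (pow_dvd_pow x (by omega)).mul_right _ |>.mul_right _
  obtain ⟨r, hr⟩ := hsq
  refine ⟨r, ?_⟩
  rw [add_pow_prime_eq' hp, Finset.sum_eq_add_sum_sdiff_singleton_of_mem h1, hr,
    Nat.choose_one_right, Nat.div_self hp.pos]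
  push_cast
  ring

lemma pow_dvd_of_mul_pow_dvd_sub_pow {R : Type*} [CommRing R] {A e k : R} {d j : ℕ}
    (hj : 1 ≤ j) (h : k * A ^ d ∣ e - A ^ d ^ j) : A ^ d ∣ e := by
  have hA : A ^ d ∣ A ^ d ^ j := pow_dvd_pow A (Nat.le_self_pow (Nat.one_le_iff_ne_zero.mp hj) d)
  simpa using (dvd_of_mul_left_dvd h).add hA

lemma isPeriodicPt_iterate_of_iterate_add_eq {α : Type*} {f : α → α} {x : α} {m n k : ℕ}
    (h : f^[m + n] x = f^[m] x) (hk : m ≤ k) (q : ℕ) : IsPeriodicPt f (n * q) (f^[k] x) := by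
  have hm : IsPeriodicPt f n (f^[m] x) := by
    rwa [IsPeriodicPt, IsFixedPt, ← iterate_add_apply, add_comm]
  obtain ⟨l, rfl⟩ := Nat.exists_eq_add_of_le hk
  simpa [← iterate_add_apply, add_comm] using (hm.apply_iterate l).mul_const q

section Unicritical

variable {R : Type*} [CommRing R] {d : ℕ} {c : R} {f : R → R}

lemma dvd_iterate_add_sub_iterate_sub_pow (hd : d.Prime) (hf : ∀ x, f x = x ^ d + c)
    (i : ℕ) {j : ℕ} (hj : 1 ≤ j) :
    (d : R) * (f^[i] 0) ^ d ∣ f^[i + j] 0 - f^[j] 0 - (f^[i] 0) ^ d ^ j := by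
  set A := f^[i] 0
  induction j, hj using Nat.le_induction with
  | base => simp [iterate_succ_apply', hf, hd.ne_zero, A]
  | succ j hj ih =>
    set b := f^[j] 0
    set e := f^[i + j] 0 - b
    obtain ⟨r, hr⟩ := exists_add_pow_prime_eq hd b e
    have hstep : f^[i + (j + 1)] 0 - f^[j + 1] 0 = (b + e) ^ d - b ^ d := by
      simp [← add_assoc, iterate_succ_apply', hf, b, e]
    have hAe : A ^ d ∣ e := pow_dvd_of_mul_pow_dvd_sub_pow hj ih
    have hpow : d * A ^ d ∣ e ^ d - (A ^ d ^ j) ^ d := ih.trans (sub_dvd_pow_sub_pow _ _ d)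
    rw [hstep, hr, pow_succ, pow_mul]
    convert hpow.add ((mul_dvd_mul_left (d : R) hAe).mul_right (b * r)) using 1
    ring

lemma dvd_pow_add_mul_iterate_pow [IsDomain R] (hd : d.Prime) (hf : ∀ x, f x = x ^ d + c)
    {i j : ℕ} (hj : 1 ≤ j) (hsucc : f^[i + (j + 1)] 0 = f^[j + 1] 0)
    (hne : f^[i + j] 0 ≠ f^[j] 0) :
    (d : R) * (f^[i] 0) ^ d ∣ (f^[i] 0) ^ (d ^ j * (d - 1)) + d * (f^[j] 0) ^ (d - 1) := by
  set A := f^[i] 0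
  set b := f^[j] 0
  set e := f^[i + j] 0 - b
  have he : e ≠ 0 := sub_ne_zero.2 hne
  have hcong : d * A ^ d ∣ e - A ^ d ^ j := dvd_iterate_add_sub_iterate_sub_pow hd hf i hj
  have hAe : A ^ d ∣ e := pow_dvd_of_mul_pow_dvd_sub_pow hj hcong
  obtain ⟨w, hw⟩ := exists_add_pow_prime_eq_add_mul_sq hd e b
  have hfix : (b + e) ^ d = b ^ d := by
    simpa [← add_assoc, iterate_succ_apply', hf, b, e] using hsucc
  have hcancel : e ^ (d - 1) + d * b ^ (d - 1) = -(d * e * w) := by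
    refine mul_left_cancel₀ he ?_
    have : e ^ d = e * e ^ (d - 1) := by rw [← pow_succ', Nat.sub_add_cancel hd.one_le]
    linear_combination hfix - hw - this
  have hpow : d * A ^ d ∣ (A ^ d ^ j) ^ (d - 1) - e ^ (d - 1) :=
    (dvd_sub_comm.1 hcong).trans (sub_dvd_pow_sub_pow _ _ _)
  rw [pow_mul]
  convert hpow.sub ((mul_dvd_mul_left (d : R) hAe).mul_right w) using 1
  linear_combination hcancel

end Unicritical

theorem key_identity_prime_case_general {K : Type*} [Field K]
    (d m n : ℕ) (hd : d.Prime) (hm : 1 ≤ m)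
    (c : 𝓞 K)
    (f : 𝓞 K → 𝓞 K) (hf : f = fun x => x ^ d + c)
    (a : ℕ → 𝓞 K) (ha : ∀ j, a j = f^[j] 0)
    (hper : f^[m + n] 0 = f^[m] 0)
    (htail : ∀ k, k < m → f^[k + n] 0 ≠ f^[k] 0)
    (i : ℕ) (hni : n ∣ i) (hmi : m ≤ i) :
    ∃ α : 𝓞 K,
      a i ^ (d ^ (m - 1) * (d - 1)) =
        (d : 𝓞 K) * (-(a (m - 1)) ^ (d - 1) + α * a i ^ d) := by
  have hfx : ∀ x, f x = x ^ d + c := fun x => by rw [hf]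
  obtain ⟨q, rfl⟩ := hni
  have hperiodic : ∀ k, m ≤ k → IsPeriodicPt f (n * q) (f^[k] 0) :=
    fun k hk => isPeriodicPt_iterate_of_iterate_add_eq hper hk q
  have hn : 0 < n := Nat.pos_of_mul_pos_right (by omega : 0 < n * q)
  -- For `m = 1`, `hper` reads `a n ^ d + c = c`, so `a n = 0 = a 0`.
  have hm2 : 2 ≤ m := by
    refine lt_of_le_of_ne hm fun hm1 => htail 0 (by omega) ?_
    subst hm1
    simpa [add_comm 1, iterate_succ_apply', hfx, hd.ne_zero] using hper
  obtain ⟨j, rfl⟩ : ∃ j, m = j + 1 := ⟨m - 1, by omega⟩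
  have hsucc : f^[n * q + (j + 1)] 0 = f^[j + 1] 0 :=
    (iterate_add_apply f _ _ 0).trans (hperiodic _ le_rfl).eq
  have hne : f^[n * q + j] 0 ≠ f^[j] 0 := by
    intro h
    have hj : IsPeriodicPt f (n * q) (f^[j] 0) := by
      rwa [IsPeriodicPt, IsFixedPt, ← iterate_add_apply]
    have himage : f (f^[j + n] 0) = f (f^[j] 0) := by
      rw [← iterate_succ_apply' f, ← iterate_succ_apply' f, ← hper, Nat.succ_eq_add_one]
      ring_nf
    exact htail j (by omega)
      ((hperiodic (j + n) (by omega)).eq_of_apply_eq_same hj (by omega) himage)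
  obtain ⟨α, hα⟩ := dvd_pow_add_mul_iterate_pow hd hfx (by omega) hsucc hne
  refine ⟨α, ?_⟩
  simp only [ha, add_tsub_cancel_right]
  linear_combination hα

/-- Let `d` be a prime, `f(x) = x^d + c` with exact type `(m,n)`,
`m ≥ 1`, and suppose `n ∣ i` with `a_i` periodic (`m ≤ i ≤ m+n−1`). Then there is
`α ∈ 𝓞 K` with `a_i^{d^{m−1}(d−1)} = d·(−a_{m−1}^{d−1} + α·a_i^d)`, where
`a_j = f^j(0)` and `K = ℚ(c)`. -/
theorem key_identity_prime_case {K : Type*} [Field K] [NumberField K]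
    (d m n : ℕ) (hd : d.Prime) (hm : 1 ≤ m) (hn : 1 ≤ n)
    (c : 𝓞 K)
    (hK : IntermediateField.adjoin ℚ {algebraMap (𝓞 K) K c} = ⊤)
    (f : 𝓞 K → 𝓞 K) (hf : f = fun x => x ^ d + c)
    (a : ℕ → 𝓞 K) (ha : ∀ j, a j = f^[j] 0)
    (hper : f^[m + n] 0 = f^[m] 0)
    (hmin : ∀ n', 0 < n' → n' < n → f^[m + n'] 0 ≠ f^[m] 0)
    (htail : ∀ k, k < m → f^[k + n] 0 ≠ f^[k] 0)
    (i : ℕ) (hni : n ∣ i) (hmi : m ≤ i) (him : i ≤ m + n - 1) :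
    ∃ α : 𝓞 K,
      a i ^ (d ^ (m - 1) * (d - 1)) =
        (d : 𝓞 K) * (-(a (m - 1)) ^ (d - 1) + α * a i ^ d) :=
  key_identity_prime_case_general d m n hd hm c f hf a ha hper htail i hni hmi
end

section
/- Let f(x) = x^d + c with exact type (m,n), m ≥ 1 (d ≥ 2 arbitrary). For the unique index i with m ≤ i ≤ m+n−1 and n | i, there exists α ∈ O_K such that d·a_{m−1}^{d−1} + a_i^{d^{m−1}(d−1)} = α·a_i^d, where a_j = f^j(0), K = ℚ(c). -/
/-!
Put `A = a_i`, `u = a_{m-1}` and `v = f^{m-1}(A)`. Since `n ∣ i` and `i ≥ m`, the point `A` lands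
on the cycle exactly where `0` does: `f^m(A) = f^m(0)`, so `v^d = u^d`, while `v = a_{m-1+n} ≠ u`
because the tail has length `m`. In a domain, `v^d = u^d` with `v ≠ u` forces
`v - u ∣ d u^{d-1}` (the derivative of `X^d` at `u`). On the other hand `f(A) - f(0) = A^d`, and
`x - y ∣ f(x) - f(y)` propagates along the orbit, so `A^d ∣ v - u`. Finally
`A^d ∣ A^{d^{m-1}(d-1)}` as soon as `m ≥ 2`; for `m = 1` we would have `u = 0`, whence `v = 0 = u`.
-/

open NumberField Function

namespace Function.IsPeriodicPt

variable {α : Type*} {f : α → α} {x : α} {m n : ℕ}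

theorem iterate_of_le (h : IsPeriodicPt f n (f^[m] x)) {k : ℕ} (hk : m ≤ k) :
    IsPeriodicPt f n (f^[k] x) := by
  obtain ⟨j, rfl⟩ := Nat.exists_eq_add_of_le hk
  rw [add_comm, iterate_add_apply]
  exact h.apply_iterate j

theorem iterate_add_of_dvd (h : IsPeriodicPt f n (f^[m] x)) {k i : ℕ} (hk : m ≤ k)
    (hi : n ∣ i) : f^[k + i] x = f^[k] x := by
  obtain ⟨t, rfl⟩ := hi
  rw [add_comm, iterate_add_apply]
  exact ((h.iterate_of_le hk).mul_const t).eq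

theorem iterate_pred_iterate_of_dvd (h : IsPeriodicPt f n (f^[m] x)) (hm : 1 ≤ m) {i : ℕ}
    (hi : n ∣ i) (hmi : m ≤ i) : f^[m - 1] (f^[i] x) = f^[m - 1 + n] x := by
  have hn : 0 < n := Nat.pos_of_dvd_of_pos hi (by omega)
  have hle : n ≤ i := Nat.le_of_dvd (by omega) hi
  rw [← iterate_add_apply, show m - 1 + i = m - 1 + n + (i - n) by omega,
    h.iterate_add_of_dvd (by omega) (Nat.dvd_sub hi dvd_rfl)]

end Function.IsPeriodicPt

section

variable {R : Type*} [CommRing R]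

theorem sub_dvd_iterate_sub_iterate {f : R → R} (hf : ∀ x y, x - y ∣ f x - f y) (k : ℕ)
    (x y : R) : x - y ∣ f^[k] x - f^[k] y := by
  induction k generalizing x y with
  | zero => simp
  | succ k ih =>
    rw [iterate_succ_apply, iterate_succ_apply]
    exact (hf x y).trans (ih (f x) (f y))

theorem pow_dvd_iterate_sub_iterate_zero {d : ℕ} {c : R} {f : R → R}
    (hf : ∀ x, f x = x ^ d + c) (hd : d ≠ 0) {k : ℕ} (hk : 1 ≤ k) (x : R) :
    x ^ d ∣ f^[k] x - f^[k] 0 := by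
  obtain ⟨j, rfl⟩ := Nat.exists_eq_add_of_le' hk
  have hf_sub : ∀ x y, x - y ∣ f x - f y := fun x y => by
    simpa only [hf, add_sub_add_right_eq_sub] using sub_dvd_pow_sub_pow x y d
  have hA : f x - f 0 = x ^ d := by rw [hf, hf, zero_pow hd, zero_add, add_sub_cancel_right]
  rw [iterate_succ_apply, iterate_succ_apply, ← hA]
  exact sub_dvd_iterate_sub_iterate hf_sub j _ _

theorem sub_dvd_mul_pow_pred_of_pow_eq_pow [IsDomain R] {d : ℕ} {u v : R}
    (h : v ^ d = u ^ d) (hne : v ≠ u) : v - u ∣ d * u ^ (d - 1) := by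
  obtain ⟨k, hk⟩ := (Polynomial.X ^ d : Polynomial R).binomExpansion u (v - u)
  simp only [add_sub_cancel, Polynomial.eval_pow, Polynomial.eval_X, Polynomial.derivative_X_pow,
    Polynomial.eval_mul, Polynomial.eval_C] at hk
  have hprod : (v - u) * (d * u ^ (d - 1) + k * (v - u)) = 0 := by
    linear_combination h - hk
  refine ⟨-k, ?_⟩
  linear_combination (mul_eq_zero.mp hprod).resolve_left (sub_ne_zero.mpr hne)

end

theorem key_identity_general_case_general {K : Type*} [Field K]
    (d m n : ℕ) (hd : 2 ≤ d) (hm : 1 ≤ m)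
    (c : 𝓞 K)
    (f : 𝓞 K → 𝓞 K) (hf : f = fun x => x ^ d + c)
    (a : ℕ → 𝓞 K) (ha : ∀ j, a j = f^[j] 0)
    (hper : f^[m + n] 0 = f^[m] 0)
    (htail : ∀ k, k < m → f^[k + n] 0 ≠ f^[k] 0)
    (i : ℕ) (hni : n ∣ i) (hmi : m ≤ i) :
    ∃ α : 𝓞 K,
      (d : 𝓞 K) * a (m - 1) ^ (d - 1) + a i ^ (d ^ (m - 1) * (d - 1)) =
        α * a i ^ d := by
  have hfx : ∀ x, f x = x ^ d + c := fun x => by rw [hf]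
  have hcycle : IsPeriodicPt f n (f^[m] 0) := by
    rwa [IsPeriodicPt, IsFixedPt, ← iterate_add_apply, add_comm]
  have hpow : (f^[m - 1] (a i)) ^ d = a (m - 1) ^ d := by
    have h : f^[m] (a i) = f^[m] 0 := by
      rw [ha i, ← iterate_add_apply, hcycle.iterate_add_of_dvd le_rfl hni]
    rw [← Nat.sub_add_cancel hm, iterate_succ_apply', iterate_succ_apply', hfx, hfx,
      add_left_inj] at h
    rwa [ha (m - 1)]
  have hne : f^[m - 1] (a i) ≠ a (m - 1) := by
    rw [ha, ha, hcycle.iterate_pred_iterate_of_dvd hm hni hmi]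
    exact htail (m - 1) (by omega)
  obtain hm1 | hm2 : m = 1 ∨ 2 ≤ m := by omega
  · have hu : a (m - 1) = 0 := by rw [ha, hm1, Nat.sub_self, iterate_zero_apply]
    rw [hu, zero_pow (by omega), pow_eq_zero_iff (by omega)] at hpow
    exact absurd (hpow.trans hu.symm) hne
  have hexp : d ≤ d ^ (m - 1) * (d - 1) :=
    (Nat.le_self_pow (by omega) d).trans (Nat.le_mul_of_pos_right _ (by omega))
  have hA_dvd : a i ^ d ∣ f^[m - 1] (a i) - a (m - 1) := by
    rw [ha (m - 1)]
    exact pow_dvd_iterate_sub_iterate_zero hfx (by omega) (by omega) (a i)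
  obtain ⟨α, hα⟩ := dvd_add (hA_dvd.trans (sub_dvd_mul_pow_pred_of_pow_eq_pow hpow hne))
    (pow_dvd_pow (a i) hexp)
  exact ⟨α, by rw [hα, mul_comm]⟩

/-- Let `f(x) = x^d + c` with exact type `(m,n)`, `m ≥ 1` (`d ≥ 2`
arbitrary). For the unique index `i` with `m ≤ i ≤ m+n−1` and `n ∣ i`, there is
`α ∈ 𝓞 K` with `d·a_{m−1}^{d−1} + a_i^{d^{m−1}(d−1)} = α·a_i^d`, where
`a_j = f^j(0)` and `K = ℚ(c)`. -/
theorem key_identity_general_case {K : Type*} [Field K] [NumberField K]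
    (d m n : ℕ) (hd : 2 ≤ d) (hm : 1 ≤ m) (hn : 1 ≤ n)
    (c : 𝓞 K)
    (hK : IntermediateField.adjoin ℚ {algebraMap (𝓞 K) K c} = ⊤)
    (f : 𝓞 K → 𝓞 K) (hf : f = fun x => x ^ d + c)
    (a : ℕ → 𝓞 K) (ha : ∀ j, a j = f^[j] 0)
    (hper : f^[m + n] 0 = f^[m] 0)
    (hmin : ∀ n', 0 < n' → n' < n → f^[m + n'] 0 ≠ f^[m] 0)
    (htail : ∀ k, k < m → f^[k + n] 0 ≠ f^[k] 0)
    (i : ℕ) (hni : n ∣ i) (hmi : m ≤ i) (him : i ≤ m + n - 1) :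
    ∃ α : 𝓞 K,
      (d : 𝓞 K) * a (m - 1) ^ (d - 1) + a i ^ (d ^ (m - 1) * (d - 1)) =
        α * a i ^ d :=
  key_identity_general_case_general d m n hd hm c f hf a ha hper htail i hni hmi
end

section
/- For f(x) = x^d + c over a ring, the discriminants of iterates satisfy Disc(f^n) = ± Disc(f^{n−1})^d · d^{d^n} · a_n up to the precise sign/exponent convention, where a_n = f^n(0); in particular every prime dividing Disc(f^n) divides d·a_1·a_2⋯a_n. -/
/-!
Let `A` be the integral closure of `𝓞 K` in an algebraic closure of `K` and `Q` a prime of `A`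
over `p`. Up to sign, `Disc(f^N)` is the product of `(f^N)'(r)` over the roots `r` of `f^N`, which
lie in `A`, so `Q` contains some `(f^N)'(r) = ∏_{i<N} d · (f^i r)^(d-1)`. Hence `d ∈ Q`, or
`f^i r ∈ Q` for some `i < N`; in the latter case `a_{N-i} = f^(N-i)(0) ≡ f^(N-i)(f^i r) = 0`
modulo `Q`.
-/

open Polynomial NumberField

theorem sub_dvd_iterate_sub_iterate_s18 {A : Type*} [CommRing A] {f : A → A}
    (hf : ∀ a b, a - b ∣ f a - f b) (n : ℕ) (a b : A) : a - b ∣ f^[n] a - f^[n] b := by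
  induction n with
  | zero => simp
  | succ n ih =>
    rw [Function.iterate_succ_apply', Function.iterate_succ_apply']
    exact ih.trans (hf _ _)

theorem Ideal.iterate_zero_mem_of_iterate_mem {A : Type*} [CommRing A] {f : A → A}
    (hf : ∀ a b, a - b ∣ f a - f b) {I : Ideal A} {r : A} {n i : ℕ}
    (hr : f^[n + i] r = 0) (hi : f^[i] r ∈ I) : f^[n] 0 ∈ I := by
  have h := sub_dvd_iterate_sub_iterate_s18 hf n (f^[i] r) 0
  rw [sub_zero, ← Function.iterate_add_apply, hr, zero_sub, dvd_neg] at h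
  exact I.mem_of_dvd h hi

namespace Polynomial

variable {R A : Type*} [CommRing R] [CommRing A] [Algebra R A] (q : R[X])

theorem map_iterate_comp_X {S : Type*} [CommRing S] (φ : R →+* S) (n : ℕ) :
    (q.comp^[n] X).map φ = (q.map φ).comp^[n] X := by
  induction n with
  | zero => simp
  | succ n ih => rw [Function.iterate_succ_apply', Function.iterate_succ_apply', map_comp, ih]

theorem aeval_iterate_comp_X (n : ℕ) (x : A) :
    aeval x (q.comp^[n] X) = (fun y => aeval y q)^[n] x := by
  induction n with
  | zero => simp
  | succ n ih => rw [Function.iterate_succ_apply', Function.iterate_succ_apply', aeval_comp, ih]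

theorem aeval_derivative_iterate_comp_X (n : ℕ) (x : A) :
    aeval x (derivative (q.comp^[n] X)) =
      ∏ i ∈ Finset.range n, aeval ((fun y => aeval y q)^[i] x) (derivative q) := by
  induction n with
  | zero => simp
  | succ n ih =>
    rw [Function.iterate_succ_apply', derivative_comp, map_mul, aeval_comp, ih,
      aeval_iterate_comp_X, Finset.prod_range_succ, mul_comm]

theorem Monic.iterate_comp_X {q : R[X]} (hq : q.Monic) (hq0 : q.natDegree ≠ 0) (n : ℕ) :
    (q.comp^[n] X).Monic := by
  nontriviality R
  suffices (q.comp^[n] X).Monic ∧ (q.comp^[n] X).natDegree = q.natDegree ^ n from this.1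
  induction n with
  | zero => simp [monic_X]
  | succ n ih =>
    rw [Function.iterate_succ_apply']
    refine ⟨hq.comp ih.1 (by simp [ih.2, hq0]), ?_⟩
    rw [natDegree_comp_eq_of_mul_ne_zero (by simp [hq.leadingCoeff, ih.1.leadingCoeff]), ih.2,
      pow_succ']

theorem sub_dvd_aeval_sub (a b : A) : a - b ∣ aeval a q - aeval b q := by
  simpa only [aeval_def, eval_map] using sub_dvd_eval_sub a b (q.map (algebraMap R A))

theorem algebraMap_iterate_aeval (n : ℕ) (x : R) :
    algebraMap R A ((fun y => aeval y q)^[n] x) = (fun y => aeval y q)^[n] (algebraMap R A x) :=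
  Function.Semiconj.iterate_right (fun y => (aeval_algebraMap_apply A y q).symm) n x

theorem algebraMap_iterate_aeval_zero_mem_of_iterate_mem {Q : Ideal A} {r : A} {n i : ℕ}
    (hr : aeval r (q.comp^[n + i] X) = 0) (hi : (fun y => aeval y q)^[i] r ∈ Q) :
    algebraMap R A ((fun y => aeval y q)^[n] 0) ∈ Q := by
  rw [aeval_iterate_comp_X] at hr
  rw [algebraMap_iterate_aeval, map_zero]
  exact Ideal.iterate_zero_mem_of_iterate_mem (sub_dvd_aeval_sub q) hr hi

theorem natCast_mem_or_mem_of_aeval_derivative_X_pow_add_C_mem {Q : Ideal A} (hQ : Q.IsPrime)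
    {d : ℕ} {c : R} {y : A} (h : aeval y (derivative (X ^ d + C c)) ∈ Q) :
    (d : A) ∈ Q ∨ y ∈ Q := by
  simp only [derivative_add, derivative_X_pow, derivative_C, add_zero, map_mul, map_natCast,
    map_pow, aeval_X] at h
  exact (hQ.mem_or_mem h).imp_right (hQ.mem_of_pow_mem _)

end Polynomial

section IntegralClosure

variable {R L : Type*} [CommRing R] [Field L] [Algebra R L]

theorem Polynomial.Monic.exists_multiset_integralClosure_map_eq_aroots {F : R[X]}
    (hF : F.Monic) : ∃ rs : Multiset (integralClosure R L), rs.map (↑) = F.aroots L :=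
  CanLift.prf _ fun _ hr => ⟨F, hF, (mem_aroots'.mp hr).2⟩

theorem exists_isPrime_comap_eq_and_aeval_derivative_mem
    (hinj : Function.Injective (algebraMap R L)) {F : R[X]} (hF : F.Monic) {D : R} {m : ℕ}
    (hD : algebraMap R L D = (-1) ^ m * ((F.aroots L).map fun r => aeval r (derivative F)).prod)
    {P : Ideal R} [P.IsPrime] (hDP : D ∈ P) :
    ∃ Q : Ideal (integralClosure R L), Q.IsPrime ∧ Q.comap (algebraMap R _) = P ∧
      ∃ r : integralClosure R L, aeval r F = 0 ∧ aeval r (derivative F) ∈ Q := by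
  obtain ⟨rs, hrs⟩ := hF.exists_multiset_integralClosure_map_eq_aroots (L := L)
  have hDA : algebraMap R (integralClosure R L) D =
      (-1) ^ m * (rs.map fun r => aeval r (derivative F)).prod := by
    apply Subtype.val_injective
    simp [hD, ← hrs, Multiset.map_map]
  have hker : RingHom.ker (algebraMap R (integralClosure R L)) ≤ P := by
    rw [(RingHom.injective_iff_ker_eq_bot _).mp fun x y h => hinj (congrArg Subtype.val h)]
    exact bot_le
  obtain ⟨Q, hQ, hQP⟩ := Ideal.exists_ideal_over_prime_of_isIntegral_of_isDomain P hker
  have hprod : (rs.map fun r => aeval r (derivative F)).prod ∈ Q := by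
    have hDQ : algebraMap R _ D ∈ Q := by rwa [← hQP] at hDP
    rw [hDA] at hDQ
    exact (hQ.mem_or_mem hDQ).resolve_left fun h => hQ.ne_top <|
      Q.eq_top_of_isUnit_mem h (isUnit_neg_one.pow m)
  obtain ⟨_, hmem, hrQ⟩ := (hQ.multiset_prod_mem_iff_exists_mem _).mp hprod
  obtain ⟨r, hr, rfl⟩ := Multiset.mem_map.mp hmem
  refine ⟨Q, hQ, hQP, r, Subtype.val_injective ?_, hrQ⟩
  have hroot := (mem_aroots'.mp (hrs ▸ Multiset.mem_map_of_mem _ hr)).2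
  simpa using hroot

end IntegralClosure

theorem prime_dvd_disc_iterate_dvd_general {K : Type*} [Field K] [NumberField K]
    (d N : ℕ) (hd : 2 ≤ d)
    (c : 𝓞 K)
    (a : ℕ → 𝓞 K) (ha : ∀ i, a i = (fun x : 𝓞 K => x ^ d + c)^[i] 0)
    (F : K[X])
    (hF : F = (fun p => (X ^ d + C (algebraMap (𝓞 K) K c)).comp p)^[N] (X : K[X]))
    (D : 𝓞 K)
    (hD : algebraMap K (AlgebraicClosure K) (algebraMap (𝓞 K) K D) =
      (-1) ^ (F.natDegree * (F.natDegree - 1) / 2) *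
        ((F.aroots (AlgebraicClosure K)).map
          (fun r => Polynomial.aeval r (Polynomial.derivative F))).prod)
    (p : Ideal (𝓞 K)) (hp : p.IsPrime)
    (hdvd : D ∈ p) :
    (d : 𝓞 K) * ∏ i ∈ Finset.Icc 1 N, a i ∈ p := by
  set q : (𝓞 K)[X] := X ^ d + C c
  have hqa : (fun y => aeval y q) = fun x : 𝓞 K => x ^ d + c := by
    funext
    simp [q]
  have hFq : F = (q.comp^[N] X).map (algebraMap (𝓞 K) K) := by
    rw [hF, map_iterate_comp_X]
    simp only [q, Polynomial.map_add, Polynomial.map_pow, map_X, map_C]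
  have hqm : q.Monic := monic_X_pow_add_C c (by omega)
  have hq0 : q.natDegree ≠ 0 := by
    rw [natDegree_X_pow_add_C]
    omega
  obtain ⟨Q, hQ, hQp, r, hr, hrQ⟩ := exists_isPrime_comap_eq_and_aeval_derivative_mem
    (FaithfulSMul.algebraMap_injective _ _) (hqm.iterate_comp_X hq0 N)
    (by rw [IsScalarTower.algebraMap_apply (𝓞 K) K (AlgebraicClosure K), hD, hFq, aroots_map,
          derivative_map]
        simp only [aeval_map_algebraMap]
        rfl) hdvd
  have hpQ : ∀ x, algebraMap (𝓞 K) _ x ∈ Q → x ∈ p := fun x hx => hQp ▸ hx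
  rw [aeval_derivative_iterate_comp_X] at hrQ
  obtain ⟨i, hi, hiQ⟩ := (Ideal.IsPrime.prod_mem_iff (hp := hQ)).mp hrQ
  rcases natCast_mem_or_mem_of_aeval_derivative_X_pow_add_C_mem hQ hiQ with hdQ | hyQ
  · exact p.mul_mem_right _ (hpQ _ (by simpa using hdQ))
  · obtain ⟨n, rfl⟩ := Nat.exists_eq_add_of_le' (Finset.mem_range.mp hi).le
    have haQ := algebraMap_iterate_aeval_zero_mem_of_iterate_mem q hr hyQ
    rw [hqa, ← ha] at haQ
    have hn : n ∈ Finset.Icc 1 (n + i) := by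
      simp only [Finset.mem_Icc, Finset.mem_range] at hi ⊢
      omega
    exact p.mul_mem_left _ (p.mem_of_dvd (Finset.dvd_prod_of_mem a hn) (hpQ _ haQ))

/-- For `f(x) = x^d + c` over a number field `K` (with `c` an algebraic
integer), any prime ideal of `𝓞 K` dividing `Disc(f^N)` divides the ideal
`(d · a_1 · a_2 ⋯ a_N)`, where `a_i = f^i(0)`. Here the discriminant of the monic
polynomial `F = f^N` is expressed by the standard formula
`Disc(F) = (−1)^(deg F (deg F − 1)/2) · ∏_{r root of F} F'(r)` (roots taken with
multiplicity in an algebraic closure of `K`). -/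
theorem prime_dvd_disc_iterate_dvd {K : Type*} [Field K] [NumberField K]
    (d N : ℕ) (hd : 2 ≤ d) (hN : 1 ≤ N)
    (c : 𝓞 K)
    (a : ℕ → 𝓞 K) (ha : ∀ i, a i = (fun x : 𝓞 K => x ^ d + c)^[i] 0)
    (F : K[X])
    (hF : F = (fun p => (X ^ d + C (algebraMap (𝓞 K) K c)).comp p)^[N] (X : K[X]))
    (D : 𝓞 K)
    (hD : algebraMap K (AlgebraicClosure K) (algebraMap (𝓞 K) K D) =
      (-1) ^ (F.natDegree * (F.natDegree - 1) / 2) *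
        ((F.aroots (AlgebraicClosure K)).map
          (fun r => Polynomial.aeval r (Polynomial.derivative F))).prod)
    (p : Ideal (𝓞 K)) (hp : p.IsPrime) (hp0 : p ≠ ⊥)
    (hdvd : D ∈ p) :
    (d : 𝓞 K) * ∏ i ∈ Finset.Icc 1 N, a i ∈ p :=
  prime_dvd_disc_iterate_dvd_general d N hd c a ha F hF D hD p hp hdvd
end
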